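/- arXiv:1102.4630 — 10 statements merged into one kernel-verified Lean document; each statement's English description precedes it below -/
import Mathlib

section
/- Let I ⊆ ℝ be an open interval, let a, b, c, d, f, g : I → ℝ be continuous, and let μ, α, β, γ, δ, ε, κ : I → ℝ be differentiable with μ(t) > 0 for all t ∈ I, satisfying the Riccati-type system: μ'/(2μ) + 2aα + d = 0, α' + b − 2cα − 4aα² = 0, β' − (c + 4aα)β = 0, γ' − aβ² = 0, δ' − (c + 4aα)δ = f − 2αg, ε' + (g − 2aδ)β = 0, κ' + gδ − aδ² = 0 on I. If v : ℝ × ℝ → ℝ is twice continuously differentiable and satisfies the standard heat equation ∂v/∂τ = ∂²v/∂ξ², then the function u(x,t) = μ(t)^{−1/2} e^{α(t)x² + δ(t)x + κ(t)} v(β(t)x + ε(t), γ(t)) satisfies the diffusion-type equation ∂u/∂t = a(t) ∂²u/∂x² − (g(t) − c(t)x) ∂u/∂x + (d(t) + f(t)x − b(t)x²) u for all x ∈ ℝ and t ∈ I. -/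
private lemma hasDerivAt_comp2 {W : ℝ × ℝ → ℝ} (hW : Differentiable ℝ W)
    {p q : ℝ → ℝ} {p' q' t : ℝ} (hp : HasDerivAt p p' t) (hq : HasDerivAt q q' t) :
    HasDerivAt (fun s => W (p s, q s))
      (p' * fderiv ℝ W (p t, q t) (1, 0) + q' * fderiv ℝ W (p t, q t) (0, 1)) t := by
  have h := (hW (p t, q t)).hasFDerivAt.comp_hasDerivAt t (hp.prodMk hq)
  refine h.congr_deriv ?_
  have h2 : (p', q') = p' • ((1:ℝ), (0:ℝ)) + q' • ((0:ℝ), (1:ℝ)) := by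
    simp [Prod.ext_iff]
  rw [h2, map_add, map_smul, map_smul]
  simp [smul_eq_mul]

/-- The substitution
`u(x,t) = μ(t)^{-1/2} e^{α(t)x² + δ(t)x + κ(t)} v(β(t)x + ε(t), γ(t))`
transforms solutions of the standard heat equation `v_τ = v_ξξ` into solutions of the
diffusion-type equation
`u_t = a(t) u_xx − (g(t) − c(t)x) u_x + (d(t) + f(t)x − b(t)x²) u`,
provided `μ, α, β, γ, δ, ε, κ` satisfy the Riccati-type system. -/
theorem riccati_substitution_reduces_to_heat
    (T₀ T₁ : ℝ) (I : Set ℝ) (hI : I = Set.Ioo T₀ T₁)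
    (a b c d f g μ α β γ δ ε κ : ℝ → ℝ)
    (ha : ContinuousOn a I) (hb : ContinuousOn b I) (hc : ContinuousOn c I)
    (hd : ContinuousOn d I) (hf : ContinuousOn f I) (hg : ContinuousOn g I)
    (hμdiff : ∀ t ∈ I, DifferentiableAt ℝ μ t)
    (hαdiff : ∀ t ∈ I, DifferentiableAt ℝ α t)
    (hβdiff : ∀ t ∈ I, DifferentiableAt ℝ β t)
    (hγdiff : ∀ t ∈ I, DifferentiableAt ℝ γ t)
    (hδdiff : ∀ t ∈ I, DifferentiableAt ℝ δ t)
    (hεdiff : ∀ t ∈ I, DifferentiableAt ℝ ε t)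
    (hκdiff : ∀ t ∈ I, DifferentiableAt ℝ κ t)
    (hμpos : ∀ t ∈ I, 0 < μ t)
    (heqμ : ∀ t ∈ I, deriv μ t / (2 * μ t) + 2 * a t * α t + d t = 0)
    (heqα : ∀ t ∈ I, deriv α t + b t - 2 * c t * α t - 4 * a t * (α t) ^ 2 = 0)
    (heqβ : ∀ t ∈ I, deriv β t - (c t + 4 * a t * α t) * β t = 0)
    (heqγ : ∀ t ∈ I, deriv γ t - a t * (β t) ^ 2 = 0)
    (heqδ : ∀ t ∈ I, deriv δ t - (c t + 4 * a t * α t) * δ t = f t - 2 * α t * g t)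
    (heqε : ∀ t ∈ I, deriv ε t + (g t - 2 * a t * δ t) * β t = 0)
    (heqκ : ∀ t ∈ I, deriv κ t + g t * δ t - a t * (δ t) ^ 2 = 0)
    (v : ℝ → ℝ → ℝ)
    (hv : ContDiff ℝ 2 (fun p : ℝ × ℝ => v p.1 p.2))
    (hheat : ∀ ξ τ : ℝ,
      deriv (fun s => v ξ s) τ = deriv (fun r => deriv (fun r' => v r' τ) r) ξ)
    (u : ℝ → ℝ → ℝ)
    (hu : ∀ x t, u x t =
      (Real.sqrt (μ t))⁻¹ * Real.exp (α t * x ^ 2 + δ t * x + κ t)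
        * v (β t * x + ε t) (γ t)) :
    ∀ x : ℝ, ∀ t ∈ I,
      deriv (fun s => u x s) t =
        a t * deriv (fun ξ => deriv (fun ξ' => u ξ' t) ξ) x
          - (g t - c t * x) * deriv (fun ξ => u ξ t) x
          + (d t + f t * x - b t * x ^ 2) * u x t := by
  intro x t ht
  set V : ℝ × ℝ → ℝ := fun p => v p.1 p.2 with hVdef
  have hVD : Differentiable ℝ V := hv.differentiable (by norm_num)
  have hV1cd : ContDiff ℝ 1 (fun p : ℝ × ℝ => fderiv ℝ V p (1, 0)) :=
    (hv.fderiv_right (by norm_num)).clm_apply contDiff_const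
  set V1 : ℝ × ℝ → ℝ := fun p => fderiv ℝ V p (1, 0) with hV1def
  set V2 : ℝ × ℝ → ℝ := fun p => fderiv ℝ V p (0, 1) with hV2def
  have hV1D : Differentiable ℝ V1 := hV1cd.differentiable one_ne_zero
  -- translate the heat equation
  have hd1 : ∀ r τ : ℝ, deriv (fun r' => v r' τ) r = V1 (r, τ) := by
    intro r τ
    have h := hasDerivAt_comp2 hVD (hasDerivAt_id r) (hasDerivAt_const r τ)
    simpa using h.deriv
  have hd2 : ∀ ξ τ : ℝ, deriv (fun s => v ξ s) τ = V2 (ξ, τ) := by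
    intro ξ τ
    have h := hasDerivAt_comp2 hVD (hasDerivAt_const τ ξ) (hasDerivAt_id τ)
    simpa using h.deriv
  have hheat' : ∀ p : ℝ × ℝ, V2 p = fderiv ℝ V1 p (1, 0) := by
    intro p
    obtain ⟨ξ, τ⟩ := p
    have h := hheat ξ τ
    rw [hd2] at h
    have h3 : (fun r => deriv (fun r' => v r' τ) r) = fun r => V1 (r, τ) := by
      funext r; exact hd1 r τ
    rw [h3] at h
    have h4 : HasDerivAt (fun r => V1 (r, τ))
        (1 * fderiv ℝ V1 (ξ, τ) (1, 0) + 0 * fderiv ℝ V1 (ξ, τ) (0, 1)) ξ :=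
      hasDerivAt_comp2 hV1D (hasDerivAt_id ξ) (hasDerivAt_const ξ τ)
    rw [h, h4.deriv]; ring
  -- abbreviations
  have hm0 : μ t ≠ 0 := (hμpos t ht).ne'
  have hS0 : Real.sqrt (μ t) ≠ 0 := (Real.sqrt_pos.mpr (hμpos t ht)).ne'
  have hS2 : Real.sqrt (μ t) ^ 2 = μ t := Real.sq_sqrt (hμpos t ht).le
  -- t-derivative of u x ·
  have hsq : HasDerivAt (fun s => Real.sqrt (μ s)) (deriv μ t / (2 * Real.sqrt (μ t))) t :=
    (hμdiff t ht).hasDerivAt.sqrt hm0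
  have hK : HasDerivAt (fun s => (Real.sqrt (μ s))⁻¹)
      (-(deriv μ t / (2 * Real.sqrt (μ t))) / Real.sqrt (μ t) ^ 2) t := hsq.inv hS0
  have hEin : HasDerivAt (fun s => α s * x ^ 2 + δ s * x + κ s)
      (deriv α t * x ^ 2 + deriv δ t * x + deriv κ t) t :=
    (((hαdiff t ht).hasDerivAt.mul_const _).add
      ((hδdiff t ht).hasDerivAt.mul_const _)).add (hκdiff t ht).hasDerivAt
  have hE : HasDerivAt (fun s => Real.exp (α s * x ^ 2 + δ s * x + κ s))
      (Real.exp (α t * x ^ 2 + δ t * x + κ t) *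
        (deriv α t * x ^ 2 + deriv δ t * x + deriv κ t)) t := hEin.exp
  have hPin : HasDerivAt (fun s => β s * x + ε s) (deriv β t * x + deriv ε t) t :=
    ((hβdiff t ht).hasDerivAt.mul_const _).add (hεdiff t ht).hasDerivAt
  have hW : HasDerivAt (fun s => V (β s * x + ε s, γ s))
      ((deriv β t * x + deriv ε t) * V1 (β t * x + ε t, γ t)
        + deriv γ t * V2 (β t * x + ε t, γ t)) t :=
    hasDerivAt_comp2 hVD hPin (hγdiff t ht).hasDerivAt
  have hueq : (fun s => u x s) = fun s => (Real.sqrt (μ s))⁻¹ *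
      Real.exp (α s * x ^ 2 + δ s * x + κ s) * V (β s * x + ε s, γ s) := by
    funext s; rw [hu, hVdef]
  have hUt : HasDerivAt (fun s => u x s)
      ((-(deriv μ t / (2 * Real.sqrt (μ t))) / Real.sqrt (μ t) ^ 2 *
          Real.exp (α t * x ^ 2 + δ t * x + κ t)
        + (Real.sqrt (μ t))⁻¹ * (Real.exp (α t * x ^ 2 + δ t * x + κ t) *
            (deriv α t * x ^ 2 + deriv δ t * x + deriv κ t))) *
          V (β t * x + ε t, γ t)
        + (Real.sqrt (μ t))⁻¹ * Real.exp (α t * x ^ 2 + δ t * x + κ t) *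
          ((deriv β t * x + deriv ε t) * V1 (β t * x + ε t, γ t)
            + deriv γ t * V2 (β t * x + ε t, γ t))) t := by
    rw [hueq]
    exact (hK.mul hE).mul hW
  -- first x-derivative of u · t, at every point
  have hUx : ∀ ξ : ℝ, HasDerivAt (fun ξ' => u ξ' t)
      ((Real.sqrt (μ t))⁻¹ * Real.exp (α t * ξ ^ 2 + δ t * ξ + κ t) *
        ((2 * α t * ξ + δ t) * V (β t * ξ + ε t, γ t)
          + β t * V1 (β t * ξ + ε t, γ t))) ξ := by
    intro ξ
    have hueqx : (fun ξ' => u ξ' t) = fun ξ' => (Real.sqrt (μ t))⁻¹ *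
        Real.exp (α t * ξ' ^ 2 + δ t * ξ' + κ t) * V (β t * ξ' + ε t, γ t) := by
      funext s; rw [hu, hVdef]
    rw [hueqx]
    have h1 : HasDerivAt (fun ξ' : ℝ => α t * ξ' ^ 2 + δ t * ξ' + κ t)
        (2 * α t * ξ + δ t) ξ := by
      have := (((hasDerivAt_pow 2 ξ).const_mul (α t)).add
        ((hasDerivAt_id ξ).const_mul (δ t))).add_const (κ t)
      refine this.congr_deriv ?_
      push_cast; ring
    have h2 := (h1.exp).const_mul ((Real.sqrt (μ t))⁻¹)
    have h4 : HasDerivAt (fun ξ' => V (β t * ξ' + ε t, γ t))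
        (β t * 1 * V1 (β t * ξ + ε t, γ t) + 0 * V2 (β t * ξ + ε t, γ t)) ξ :=
      hasDerivAt_comp2 hVD (((hasDerivAt_id ξ).const_mul (β t)).add_const (ε t))
        (hasDerivAt_const ξ (γ t))
    have := h2.mul h4
    refine this.congr_deriv ?_
    ring
  have hfirst : (deriv fun ξ' => u ξ' t) = fun ξ =>
      (Real.sqrt (μ t))⁻¹ * Real.exp (α t * ξ ^ 2 + δ t * ξ + κ t) *
        ((2 * α t * ξ + δ t) * V (β t * ξ + ε t, γ t)
          + β t * V1 (β t * ξ + ε t, γ t)) := by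
    funext ξ; exact (hUx ξ).deriv
  -- second x-derivative at x
  have hU2 : HasDerivAt (fun ξ =>
      (Real.sqrt (μ t))⁻¹ * Real.exp (α t * ξ ^ 2 + δ t * ξ + κ t) *
        ((2 * α t * ξ + δ t) * V (β t * ξ + ε t, γ t)
          + β t * V1 (β t * ξ + ε t, γ t)))
      ((Real.sqrt (μ t))⁻¹ * Real.exp (α t * x ^ 2 + δ t * x + κ t) *
        ((2 * α t * x + δ t) * ((2 * α t * x + δ t) * V (β t * x + ε t, γ t)
            + β t * V1 (β t * x + ε t, γ t))
          + (2 * α t * V (β t * x + ε t, γ t)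
            + (2 * α t * x + δ t) * (β t * V1 (β t * x + ε t, γ t))
            + β t * β t * V2 (β t * x + ε t, γ t)))) x := by
    have h1 : HasDerivAt (fun ξ' : ℝ => α t * ξ' ^ 2 + δ t * ξ' + κ t)
        (2 * α t * x + δ t) x := by
      have := (((hasDerivAt_pow 2 x).const_mul (α t)).add
        ((hasDerivAt_id x).const_mul (δ t))).add_const (κ t)
      refine this.congr_deriv ?_
      push_cast; ring
    have h2 := (h1.exp).const_mul ((Real.sqrt (μ t))⁻¹)
    have hlin : HasDerivAt (fun ξ' : ℝ => 2 * α t * ξ' + δ t) (2 * α t) x := by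
      have := ((hasDerivAt_id x).const_mul (2 * α t)).add_const (δ t)
      simpa using this
    have h4 : HasDerivAt (fun ξ' => V (β t * ξ' + ε t, γ t))
        (β t * 1 * V1 (β t * x + ε t, γ t) + 0 * V2 (β t * x + ε t, γ t)) x :=
      hasDerivAt_comp2 hVD (((hasDerivAt_id x).const_mul (β t)).add_const (ε t))
        (hasDerivAt_const x (γ t))
    have h5 : HasDerivAt (fun ξ' => V1 (β t * ξ' + ε t, γ t))
        (β t * 1 * fderiv ℝ V1 (β t * x + ε t, γ t) (1, 0)
          + 0 * fderiv ℝ V1 (β t * x + ε t, γ t) (0, 1)) x :=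
      hasDerivAt_comp2 hV1D (((hasDerivAt_id x).const_mul (β t)).add_const (ε t))
        (hasDerivAt_const x (γ t))
    have hP : HasDerivAt (fun ξ' => (2 * α t * ξ' + δ t) * V (β t * ξ' + ε t, γ t)
        + β t * V1 (β t * ξ' + ε t, γ t))
        ((2 * α t) * V (β t * x + ε t, γ t)
          + (2 * α t * x + δ t) * (β t * 1 * V1 (β t * x + ε t, γ t)
              + 0 * V2 (β t * x + ε t, γ t))
          + β t * (β t * 1 * fderiv ℝ V1 (β t * x + ε t, γ t) (1, 0)
              + 0 * fderiv ℝ V1 (β t * x + ε t, γ t) (0, 1))) x :=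
      (hlin.mul h4).add (h5.const_mul (β t))
    have := h2.mul hP
    refine this.congr_deriv ?_
    rw [← hheat']
    ring
  -- Riccati relations in solved form
  have hμ' : deriv μ t = -(2 * Real.sqrt (μ t) ^ 2) * (2 * a t * α t + d t) := by
    have h := heqμ t ht
    have h2 : deriv μ t / (2 * μ t) = -(2 * a t * α t + d t) := by linarith
    rw [div_eq_iff (by positivity)] at h2
    rw [hS2]; linear_combination h2
  have hα' : deriv α t = 2 * c t * α t + 4 * a t * α t ^ 2 - b t := by
    have := heqα t ht; linarith
  have hβ' : deriv β t = (c t + 4 * a t * α t) * β t := by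
    have := heqβ t ht; linarith
  have hγ' : deriv γ t = a t * β t ^ 2 := by
    have := heqγ t ht; linarith
  have hδ' : deriv δ t = (c t + 4 * a t * α t) * δ t + f t - 2 * α t * g t := by
    have := heqδ t ht; linarith
  have hε' : deriv ε t = -(g t - 2 * a t * δ t) * β t := by
    have := heqε t ht; linarith
  have hκ' : deriv κ t = a t * δ t ^ 2 - g t * δ t := by
    have := heqκ t ht; linarith
  have hvV : v (β t * x + ε t) (γ t) = V (β t * x + ε t, γ t) := rfl
  rw [hUt.deriv, hfirst, hU2.deriv, hu, hvV,
    hμ', hα', hβ', hγ', hδ', hε', hκ']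
  beta_reduce
  field_simp
  ring
end

section
/- Let I ⊆ ℝ be an open interval, let a, c, d : I → ℝ with a differentiable, a(t) ≠ 0 on I, d differentiable, and let b : I → ℝ. Suppose μ : I → ℝ is twice differentiable with μ(t) ≠ 0 on I and satisfies the characteristic equation μ'' − τ(t) μ' − 4σ(t) μ = 0, where τ(t) = a'/a + 2c − 4d and σ(t) = ab + cd − d² + a'd/(2a) − d'/2. Then the function α(t) = −μ'(t)/(4 a(t) μ(t)) − d(t)/(2 a(t)) satisfies the Riccati equation α' + b − 2cα − 4aα² = 0 on I. -/
/-- If `μ` solves the characteristic equation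
`μ'' − τ(t) μ' − 4σ(t) μ = 0` with `τ = a'/a + 2c − 4d` and
`σ = ab + cd − d² + a'd/(2a) − d'/2`, then
`α = −μ'/(4aμ) − d/(2a)` solves the Riccati equation `α' + b − 2cα − 4aα² = 0`. -/
theorem characteristic_equation_gives_riccati_solution
    (T₀ T₁ : ℝ) (I : Set ℝ) (hI : I = Set.Ioo T₀ T₁)
    (a b c d μ : ℝ → ℝ)
    (hadiff : ∀ t ∈ I, DifferentiableAt ℝ a t)
    (hane : ∀ t ∈ I, a t ≠ 0)
    (hddiff : ∀ t ∈ I, DifferentiableAt ℝ d t)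
    (hμdiff : ∀ t ∈ I, DifferentiableAt ℝ μ t)
    (hμdiff2 : ∀ t ∈ I, DifferentiableAt ℝ (deriv μ) t)
    (hμne : ∀ t ∈ I, μ t ≠ 0)
    (hchar : ∀ t ∈ I,
      deriv (deriv μ) t
        - (deriv a t / a t + 2 * c t - 4 * d t) * deriv μ t
        - 4 * (a t * b t + c t * d t - (d t) ^ 2
            + deriv a t * d t / (2 * a t) - deriv d t / 2) * μ t = 0) :
    ∀ t ∈ I,
      HasDerivAt (fun s => -(deriv μ s) / (4 * a s * μ s) - d s / (2 * a s))
        (2 * c t * (-(deriv μ t) / (4 * a t * μ t) - d t / (2 * a t))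
          + 4 * a t * (-(deriv μ t) / (4 * a t * μ t) - d t / (2 * a t)) ^ 2
          - b t) t := by
  intro t ht
  have ha := (hadiff t ht).hasDerivAt
  have hd := (hddiff t ht).hasDerivAt
  have hμ := (hμdiff t ht).hasDerivAt
  have hμ2 := (hμdiff2 t ht).hasDerivAt
  have hane' := hane t ht
  have hμne' := hμne t ht
  have hden : (4 : ℝ) * a t * μ t ≠ 0 := by
    simp [hane', hμne']
  have hden2 : (2 : ℝ) * a t ≠ 0 := by simp [hane']
  have h1 : HasDerivAt (fun s => -(deriv μ s) / (4 * a s * μ s) - d s / (2 * a s))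
      ((-(deriv (deriv μ) t) * (4 * a t * μ t)
        - (-(deriv μ t)) * (4 * deriv a t * μ t + 4 * a t * deriv μ t)) / (4 * a t * μ t) ^ 2
       - (deriv d t * (2 * a t) - d t * (2 * deriv a t)) / (2 * a t) ^ 2) t := by
    exact (hμ2.neg.div ((ha.const_mul 4).mul hμ) hden).sub (hd.div (ha.const_mul 2) hden2)
  convert h1 using 1
  have e := hchar t ht
  field_simp at e ⊢
  linear_combination (2 * μ t) * e
end

section
/- Let I ⊆ ℝ be an open interval, let a, b, c, d, f, g : I → ℝ be continuous, and let μ, α, β, γ, δ, ε, κ : I → ℝ be differentiable with μ(t) > 0, satisfying the Riccati-type system μ'/(2μ) + 2aα + d = 0, α' + b − 2cα − 4aα² = 0, β' − (c + 4aα)β = 0, γ' − aβ² = 0, δ' − (c + 4aα)δ = f − 2αg, ε' + (g − 2aδ)β = 0, κ' + gδ − aδ² = 0 on I. Then for every fixed y ∈ ℝ the function u(x,t) = μ(t)^{−1/2} exp(α(t)x² + β(t)xy + γ(t)y² + δ(t)x + ε(t)y + κ(t)) satisfies the diffusion-type equation ∂u/∂t = a(t) ∂²u/∂x² − (g(t)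 − c(t)x) ∂u/∂x + (d(t) + f(t)x − b(t)x²) u for all x ∈ ℝ, t ∈ I. -/
/-- If `μ, α, β, γ, δ, ε, κ` satisfy the Riccati-type system, then for every
fixed `y` the function
`u(x,t) = μ(t)^{-1/2} exp(α(t)x² + β(t)xy + γ(t)y² + δ(t)x + ε(t)y + κ(t))`
satisfies the diffusion-type equation
`u_t = a(t) u_xx − (g(t) − c(t)x) u_x + (d(t) + f(t)x − b(t)x²) u`. -/
theorem riccati_system_gives_particular_solution
    (T₀ T₁ : ℝ) (I : Set ℝ) (hI : I = Set.Ioo T₀ T₁)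
    (a b c d f g μ α β γ δ ε κ : ℝ → ℝ)
    (ha : ContinuousOn a I) (hb : ContinuousOn b I) (hc : ContinuousOn c I)
    (hd : ContinuousOn d I) (hf : ContinuousOn f I) (hg : ContinuousOn g I)
    (hμdiff : ∀ t ∈ I, DifferentiableAt ℝ μ t)
    (hαdiff : ∀ t ∈ I, DifferentiableAt ℝ α t)
    (hβdiff : ∀ t ∈ I, DifferentiableAt ℝ β t)
    (hγdiff : ∀ t ∈ I, DifferentiableAt ℝ γ t)
    (hδdiff : ∀ t ∈ I, DifferentiableAt ℝ δ t)
    (hεdiff : ∀ t ∈ I, DifferentiableAt ℝ ε t)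
    (hκdiff : ∀ t ∈ I, DifferentiableAt ℝ κ t)
    (hμpos : ∀ t ∈ I, 0 < μ t)
    (heqμ : ∀ t ∈ I, deriv μ t / (2 * μ t) + 2 * a t * α t + d t = 0)
    (heqα : ∀ t ∈ I, deriv α t + b t - 2 * c t * α t - 4 * a t * (α t) ^ 2 = 0)
    (heqβ : ∀ t ∈ I, deriv β t - (c t + 4 * a t * α t) * β t = 0)
    (heqγ : ∀ t ∈ I, deriv γ t - a t * (β t) ^ 2 = 0)
    (heqδ : ∀ t ∈ I, deriv δ t - (c t + 4 * a t * α t) * δ t = f t - 2 * α t * g t)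
    (heqε : ∀ t ∈ I, deriv ε t + (g t - 2 * a t * δ t) * β t = 0)
    (heqκ : ∀ t ∈ I, deriv κ t + g t * δ t - a t * (δ t) ^ 2 = 0) :
    ∀ y : ℝ, ∀ u : ℝ → ℝ → ℝ,
      (∀ x t, u x t =
        (Real.sqrt (μ t))⁻¹ *
          Real.exp (α t * x ^ 2 + β t * x * y + γ t * y ^ 2
            + δ t * x + ε t * y + κ t)) →
      ∀ x : ℝ, ∀ t ∈ I,
        deriv (fun s => u x s) t =
          a t * deriv (fun ξ => deriv (fun ξ' => u ξ' t) ξ) x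
            - (g t - c t * x) * deriv (fun ξ => u ξ t) x
            + (d t + f t * x - b t * x ^ 2) * u x t := by
  intro y u hu x t ht
  have hm : 0 < μ t := hμpos t ht
  have hS : Real.sqrt (μ t) ≠ 0 := (Real.sqrt_pos.2 hm).ne'
  -- spatial derivative helper
  have hV : ∀ ξ : ℝ, HasDerivAt (fun ξ' : ℝ => (Real.sqrt (μ t))⁻¹ *
      Real.exp (α t * ξ' ^ 2 + β t * ξ' * y + γ t * y ^ 2 + δ t * ξ' + ε t * y + κ t))
      ((Real.sqrt (μ t))⁻¹ *
        Real.exp (α t * ξ ^ 2 + β t * ξ * y + γ t * y ^ 2 + δ t * ξ + ε t * y + κ t)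
        * (2 * α t * ξ + β t * y + δ t)) ξ := by
    intro ξ
    have hP : HasDerivAt (fun ξ' : ℝ =>
        α t * ξ' ^ 2 + β t * ξ' * y + γ t * y ^ 2 + δ t * ξ' + ε t * y + κ t)
        (2 * α t * ξ + β t * y + δ t) ξ := by
      have h1 : HasDerivAt (fun ξ' : ℝ => α t * ξ' ^ 2) (α t * (2 * ξ)) ξ := by
        simpa using (hasDerivAt_pow 2 ξ).const_mul (α t)
      have h2 : HasDerivAt (fun ξ' : ℝ => β t * ξ' * y) (β t * y) ξ := by
        simpa using ((hasDerivAt_id ξ).const_mul (β t)).mul_const y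
      have h3 : HasDerivAt (fun ξ' : ℝ => δ t * ξ') (δ t) ξ := by
        simpa using (hasDerivAt_id ξ).const_mul (δ t)
      have h4 := ((((h1.add h2).add_const (γ t * y ^ 2)).add h3).add_const
        (ε t * y)).add_const (κ t)
      exact h4.congr_deriv (by ring)
    have h5 := hP.exp.const_mul ((Real.sqrt (μ t))⁻¹)
    exact h5.congr_deriv (by ring)
  have hfunx : (fun ξ' => u ξ' t) = fun ξ' => (Real.sqrt (μ t))⁻¹ *
      Real.exp (α t * ξ' ^ 2 + β t * ξ' * y + γ t * y ^ 2 + δ t * ξ' + ε t * y + κ t) :=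
    funext fun ξ' => hu ξ' t
  have hderiv1 : (fun ξ => deriv (fun ξ' => u ξ' t) ξ) = fun ξ =>
      (Real.sqrt (μ t))⁻¹ *
        Real.exp (α t * ξ ^ 2 + β t * ξ * y + γ t * y ^ 2 + δ t * ξ + ε t * y + κ t)
        * (2 * α t * ξ + β t * y + δ t) := by
    funext ξ
    rw [hfunx]
    exact (hV ξ).deriv
  -- second spatial derivative
  have hLin : HasDerivAt (fun ξ : ℝ => 2 * α t * ξ + β t * y + δ t) (2 * α t) x := by
    simpa using (((hasDerivAt_id x).const_mul (2 * α t)).add_const (β t * y)).add_const (δ t)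
  have hdd : deriv (fun ξ => deriv (fun ξ' => u ξ' t) ξ) x =
      ((Real.sqrt (μ t))⁻¹ *
        Real.exp (α t * x ^ 2 + β t * x * y + γ t * y ^ 2 + δ t * x + ε t * y + κ t)
        * (2 * α t * x + β t * y + δ t)) * (2 * α t * x + β t * y + δ t)
      + ((Real.sqrt (μ t))⁻¹ *
        Real.exp (α t * x ^ 2 + β t * x * y + γ t * y ^ 2 + δ t * x + ε t * y + κ t))
        * (2 * α t) := by
    rw [hderiv1]
    exact ((hV x).mul hLin).deriv
  have hd1 : deriv (fun ξ => u ξ t) x =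
      (Real.sqrt (μ t))⁻¹ *
        Real.exp (α t * x ^ 2 + β t * x * y + γ t * y ^ 2 + δ t * x + ε t * y + κ t)
        * (2 * α t * x + β t * y + δ t) := by
    rw [hfunx]
    exact (hV x).deriv
  -- time derivative
  have hSqrt : HasDerivAt (fun s => Real.sqrt (μ s))
      (deriv μ t / (2 * Real.sqrt (μ t))) t :=
    ((hμdiff t ht).hasDerivAt).sqrt hm.ne'
  have hInv := hSqrt.inv hS
  have hE : HasDerivAt (fun s => α s * x ^ 2 + β s * x * y + γ s * y ^ 2
        + δ s * x + ε s * y + κ s)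
      (deriv α t * x ^ 2 + deriv β t * x * y + deriv γ t * y ^ 2
        + deriv δ t * x + deriv ε t * y + deriv κ t) t := by
    exact ((((((hαdiff t ht).hasDerivAt.mul_const (x ^ 2)).add
      ((((hβdiff t ht).hasDerivAt.mul_const x).mul_const y))).add
      ((hγdiff t ht).hasDerivAt.mul_const (y ^ 2))).add
      ((hδdiff t ht).hasDerivAt.mul_const x)).add
      ((hεdiff t ht).hasDerivAt.mul_const y)).add (hκdiff t ht).hasDerivAt
  have hT := hInv.mul hE.exp
  have hfunt : (fun s => u x s) = fun s => (Real.sqrt (μ s))⁻¹ *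
      Real.exp (α s * x ^ 2 + β s * x * y + γ s * y ^ 2 + δ s * x + ε s * y + κ s) :=
    funext fun s => hu x s
  have hdt : deriv (fun s => u x s) t =
      -(deriv μ t / (2 * Real.sqrt (μ t))) / Real.sqrt (μ t) ^ 2 *
        Real.exp (α t * x ^ 2 + β t * x * y + γ t * y ^ 2 + δ t * x + ε t * y + κ t)
      + (Real.sqrt (μ t))⁻¹ *
        (Real.exp (α t * x ^ 2 + β t * x * y + γ t * y ^ 2 + δ t * x + ε t * y + κ t) *
          (deriv α t * x ^ 2 + deriv β t * x * y + deriv γ t * y ^ 2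
            + deriv δ t * x + deriv ε t * y + deriv κ t)) := by
    rw [hfunt]
    exact hT.deriv
  -- derivative values from the Riccati system
  have hμ' : deriv μ t = -(2 * a t * α t + d t) * (2 * μ t) := by
    have h := heqμ t ht
    have h2 : deriv μ t / (2 * μ t) = -(2 * a t * α t + d t) := by linarith
    field_simp at h2
    linarith
  have hα' : deriv α t = -(b t) + 2 * c t * α t + 4 * a t * (α t) ^ 2 := by
    have := heqα t ht; linarith
  have hβ' : deriv β t = (c t + 4 * a t * α t) * β t := by
    have := heqβ t ht; linarith
  have hγ' : deriv γ t = a t * (β t) ^ 2 := by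
    have := heqγ t ht; linarith
  have hδ' : deriv δ t = (c t + 4 * a t * α t) * δ t + (f t - 2 * α t * g t) := by
    have := heqδ t ht; linarith
  have hε' : deriv ε t = -((g t - 2 * a t * δ t) * β t) := by
    have := heqε t ht; linarith
  have hκ' : deriv κ t = -(g t * δ t) + a t * (δ t) ^ 2 := by
    have := heqκ t ht; linarith
  rw [hdt, hdd, hd1, hu x t, hμ', hα', hβ', hγ', hδ', hε', hκ', Real.sq_sqrt hm.le]
  field_simp
  ring
end

section
/- Let I ⊆ ℝ be an open interval, let a, b, c, d, f, g : I → ℝ be continuous, and suppose μ₀, α₀, β₀, γ₀, δ₀, ε₀, κ₀ : I → ℝ are differentiable and satisfy the Riccati-type system μ₀'/(2μ₀) + 2aα₀ + d = 0, α₀' + b − 2cα₀ − 4aα₀² = 0, β₀' − (c + 4aα₀)β₀ = 0, γ₀' − aβ₀² = 0, δ₀' − (c + 4aα₀)δ₀ = f − 2α₀g, ε₀' + (g − 2aδ₀)β₀ = 0, κ₀' + gδ₀ − aδ₀² = 0 on I, with μ₀(t) ≠ 0 on I. Let μ₀⁰, α⁰, β⁰, γ⁰, δ⁰, ε⁰,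 κ⁰ ∈ ℝ be constants with μ₀⁰ ≠ 0 and α⁰ + γ₀(t) ≠ 0 for all t ∈ I. Then the functions μ(t) = −2 μ₀⁰ μ₀(t) (α⁰ + γ₀(t)), α(t) = α₀(t) − β₀²(t)/(4(α⁰ + γ₀(t))), β(t) = −β⁰ β₀(t)/(2(α⁰ + γ₀(t))), γ(t) = γ⁰ − (β⁰)²/(4(α⁰ + γ₀(t))), δ(t) = δ₀(t) − β₀(t)(δ⁰ + ε₀(t))/(2(α⁰ + γ₀(t))), ε(t) = ε⁰ − β⁰(δ⁰ + ε₀(t))/(2(α⁰ + γ₀(t))), κ(t) = κ⁰ + κ₀(t) − (δ⁰ + ε₀(t))²/(4(α⁰ + γ₀(t))) also satisfy the Riccati-type system μ'/(2μ) + 2aα + d = 0, α' + b − 2cα − 4aα² = 0, β' − (c + 4aα)β = 0, γ' − aβ² = 0, δ' − (c + 4aα)δ = f − 2αg, ε' + (g − 2aδ)β = 0, κ' + gδ − aδ² = 0 on I. -/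
set_option maxHeartbeats 2000000 in
/-- nonlinear superposition principle: given a particular ("fundamental")
solution `μ₀, α₀, β₀, γ₀, δ₀, ε₀, κ₀` of the Riccati-type system, the functions
`μ = −2μ⁰μ₀(α⁰ + γ₀)`, `α = α₀ − β₀²/(4(α⁰ + γ₀))`, `β = −β⁰β₀/(2(α⁰ + γ₀))`,
`γ = γ⁰ − (β⁰)²/(4(α⁰ + γ₀))`, `δ = δ₀ − β₀(δ⁰ + ε₀)/(2(α⁰ + γ₀))`,
`ε = ε⁰ − β⁰(δ⁰ + ε₀)/(2(α⁰ + γ₀))`, `κ = κ⁰ + κ₀ − (δ⁰ + ε₀)²/(4(α⁰ + γ₀))`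
also satisfy the Riccati-type system. -/
theorem riccati_nonlinear_superposition
    (T₀ T₁ : ℝ) (I : Set ℝ) (hI : I = Set.Ioo T₀ T₁)
    (a b c d f g μ₀ α₀ β₀ γ₀ δ₀ ε₀ κ₀ : ℝ → ℝ)
    (ha : ContinuousOn a I) (hb : ContinuousOn b I) (hc : ContinuousOn c I)
    (hd : ContinuousOn d I) (hf : ContinuousOn f I) (hg : ContinuousOn g I)
    (hμ₀diff : ∀ t ∈ I, DifferentiableAt ℝ μ₀ t)
    (hα₀diff : ∀ t ∈ I, DifferentiableAt ℝ α₀ t)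
    (hβ₀diff : ∀ t ∈ I, DifferentiableAt ℝ β₀ t)
    (hγ₀diff : ∀ t ∈ I, DifferentiableAt ℝ γ₀ t)
    (hδ₀diff : ∀ t ∈ I, DifferentiableAt ℝ δ₀ t)
    (hε₀diff : ∀ t ∈ I, DifferentiableAt ℝ ε₀ t)
    (hκ₀diff : ∀ t ∈ I, DifferentiableAt ℝ κ₀ t)
    (hμ₀ne : ∀ t ∈ I, μ₀ t ≠ 0)
    (heqμ₀ : ∀ t ∈ I, deriv μ₀ t / (2 * μ₀ t) + 2 * a t * α₀ t + d t = 0)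
    (heqα₀ : ∀ t ∈ I, deriv α₀ t + b t - 2 * c t * α₀ t - 4 * a t * (α₀ t) ^ 2 = 0)
    (heqβ₀ : ∀ t ∈ I, deriv β₀ t - (c t + 4 * a t * α₀ t) * β₀ t = 0)
    (heqγ₀ : ∀ t ∈ I, deriv γ₀ t - a t * (β₀ t) ^ 2 = 0)
    (heqδ₀ : ∀ t ∈ I, deriv δ₀ t - (c t + 4 * a t * α₀ t) * δ₀ t = f t - 2 * α₀ t * g t)
    (heqε₀ : ∀ t ∈ I, deriv ε₀ t + (g t - 2 * a t * δ₀ t) * β₀ t = 0)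
    (heqκ₀ : ∀ t ∈ I, deriv κ₀ t + g t * δ₀ t - a t * (δ₀ t) ^ 2 = 0)
    (μ0 α0 β0 γ0 δ0 ε0 κ0 : ℝ)
    (hμ0ne : μ0 ≠ 0)
    (hαγne : ∀ t ∈ I, α0 + γ₀ t ≠ 0)
    (μ α β γ δ ε κ : ℝ → ℝ)
    (hμ : ∀ t, μ t = -2 * μ0 * μ₀ t * (α0 + γ₀ t))
    (hα : ∀ t, α t = α₀ t - (β₀ t) ^ 2 / (4 * (α0 + γ₀ t)))
    (hβ : ∀ t, β t = -(β0 * β₀ t) / (2 * (α0 + γ₀ t)))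
    (hγ : ∀ t, γ t = γ0 - β0 ^ 2 / (4 * (α0 + γ₀ t)))
    (hδ : ∀ t, δ t = δ₀ t - β₀ t * (δ0 + ε₀ t) / (2 * (α0 + γ₀ t)))
    (hε : ∀ t, ε t = ε0 - β0 * (δ0 + ε₀ t) / (2 * (α0 + γ₀ t)))
    (hκ : ∀ t, κ t = κ0 + κ₀ t - (δ0 + ε₀ t) ^ 2 / (4 * (α0 + γ₀ t))) :
    ∀ t ∈ I,
      (DifferentiableAt ℝ μ t ∧ DifferentiableAt ℝ α t ∧ DifferentiableAt ℝ β t ∧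
        DifferentiableAt ℝ γ t ∧ DifferentiableAt ℝ δ t ∧ DifferentiableAt ℝ ε t ∧
        DifferentiableAt ℝ κ t) ∧
      deriv μ t / (2 * μ t) + 2 * a t * α t + d t = 0 ∧
      deriv α t + b t - 2 * c t * α t - 4 * a t * (α t) ^ 2 = 0 ∧
      deriv β t - (c t + 4 * a t * α t) * β t = 0 ∧
      deriv γ t - a t * (β t) ^ 2 = 0 ∧
      deriv δ t - (c t + 4 * a t * α t) * δ t = f t - 2 * α t * g t ∧
      deriv ε t + (g t - 2 * a t * δ t) * β t = 0 ∧
      deriv κ t + g t * δ t - a t * (δ t) ^ 2 = 0 := by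
  intro t ht
  have hA : α0 + γ₀ t ≠ 0 := hαγne t ht
  have hμ₀t : μ₀ t ≠ 0 := hμ₀ne t ht
  -- explicit derivative values of the fundamental solution
  have hm : deriv μ₀ t = -(2 * a t * α₀ t + d t) * (2 * μ₀ t) := by
    have h := heqμ₀ t ht
    have h2 : (2 : ℝ) * μ₀ t ≠ 0 := by
      exact mul_ne_zero two_ne_zero hμ₀t
    field_simp at h
    linarith
  have hal : deriv α₀ t = -(b t) + 2 * c t * α₀ t + 4 * a t * (α₀ t) ^ 2 := by
    linarith [heqα₀ t ht]
  have hbe : deriv β₀ t = (c t + 4 * a t * α₀ t) * β₀ t := by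
    linarith [heqβ₀ t ht]
  have hga : deriv γ₀ t = a t * (β₀ t) ^ 2 := by
    linarith [heqγ₀ t ht]
  have hde : deriv δ₀ t = (c t + 4 * a t * α₀ t) * δ₀ t + f t - 2 * α₀ t * g t := by
    linarith [heqδ₀ t ht]
  have hep : deriv ε₀ t = -((g t - 2 * a t * δ₀ t) * β₀ t) := by
    linarith [heqε₀ t ht]
  have hka : deriv κ₀ t = -(g t * δ₀ t) + a t * (δ₀ t) ^ 2 := by
    linarith [heqκ₀ t ht]
  have Hμ₀ : HasDerivAt μ₀ (deriv μ₀ t) t := (hμ₀diff t ht).hasDerivAt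
  have Hα₀ : HasDerivAt α₀ (deriv α₀ t) t := (hα₀diff t ht).hasDerivAt
  have Hβ₀ : HasDerivAt β₀ (deriv β₀ t) t := (hβ₀diff t ht).hasDerivAt
  have Hγ₀ : HasDerivAt γ₀ (deriv γ₀ t) t := (hγ₀diff t ht).hasDerivAt
  have Hδ₀ : HasDerivAt δ₀ (deriv δ₀ t) t := (hδ₀diff t ht).hasDerivAt
  have Hε₀ : HasDerivAt ε₀ (deriv ε₀ t) t := (hε₀diff t ht).hasDerivAt
  have Hκ₀ : HasDerivAt κ₀ (deriv κ₀ t) t := (hκ₀diff t ht).hasDerivAt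
  have HA : HasDerivAt (fun s => α0 + γ₀ s) (deriv γ₀ t) t := Hγ₀.const_add α0
  have h4A : 4 * (α0 + γ₀ t) ≠ 0 := mul_ne_zero (by norm_num) hA
  have h2A : 2 * (α0 + γ₀ t) ≠ 0 := mul_ne_zero two_ne_zero hA
  have H4A : HasDerivAt (fun s => 4 * (α0 + γ₀ s)) (4 * deriv γ₀ t) t := HA.const_mul 4
  have H2A : HasDerivAt (fun s => 2 * (α0 + γ₀ s)) (2 * deriv γ₀ t) t := HA.const_mul 2
  have HE : HasDerivAt (fun s => δ0 + ε₀ s) (deriv ε₀ t) t := Hε₀.const_add δ0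
  -- μ
  have hμf : μ = fun s => -2 * μ0 * μ₀ s * (α0 + γ₀ s) := funext hμ
  have Hμ : HasDerivAt μ
      (-2 * μ0 * deriv μ₀ t * (α0 + γ₀ t) + -2 * μ0 * μ₀ t * deriv γ₀ t) t := by
    rw [hμf]
    exact (Hμ₀.const_mul (-2 * μ0)).mul HA
  -- α
  have hαf : α = fun s => α₀ s - (β₀ s) ^ 2 / (4 * (α0 + γ₀ s)) := funext hα
  have Hα : HasDerivAt α
      (deriv α₀ t - ((2 : ℕ) * β₀ t ^ 1 * deriv β₀ t * (4 * (α0 + γ₀ t)) -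
        (β₀ t) ^ 2 * (4 * deriv γ₀ t)) / (4 * (α0 + γ₀ t)) ^ 2) t := by
    rw [hαf]
    exact Hα₀.sub ((Hβ₀.pow 2).div H4A h4A)
  -- β
  have hβf : β = fun s => -(β0 * β₀ s) / (2 * (α0 + γ₀ s)) := funext hβ
  have Hβ : HasDerivAt β
      ((-(β0 * deriv β₀ t) * (2 * (α0 + γ₀ t)) -
        -(β0 * β₀ t) * (2 * deriv γ₀ t)) / (2 * (α0 + γ₀ t)) ^ 2) t := by
    rw [hβf]
    exact ((Hβ₀.const_mul β0).neg).div H2A h2A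
  -- γ
  have hγf : γ = fun s => γ0 - β0 ^ 2 / (4 * (α0 + γ₀ s)) := funext hγ
  have Hγ : HasDerivAt γ
      (-(((0 : ℝ) * (4 * (α0 + γ₀ t)) - β0 ^ 2 * (4 * deriv γ₀ t)) / (4 * (α0 + γ₀ t)) ^ 2)) t := by
    rw [hγf]
    exact ((((hasDerivAt_const t (β0 ^ 2))).div H4A h4A).const_sub γ0)
  -- δ
  have hδf : δ = fun s => δ₀ s - β₀ s * (δ0 + ε₀ s) / (2 * (α0 + γ₀ s)) := funext hδ
  have Hδ : HasDerivAt δ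
      (deriv δ₀ t - ((deriv β₀ t * (δ0 + ε₀ t) + β₀ t * deriv ε₀ t) * (2 * (α0 + γ₀ t)) -
        β₀ t * (δ0 + ε₀ t) * (2 * deriv γ₀ t)) / (2 * (α0 + γ₀ t)) ^ 2) t := by
    rw [hδf]
    exact Hδ₀.sub ((Hβ₀.mul HE).div H2A h2A)
  -- ε
  have hεf : ε = fun s => ε0 - β0 * (δ0 + ε₀ s) / (2 * (α0 + γ₀ s)) := funext hε
  have Hε : HasDerivAt ε
      (-(((β0 * deriv ε₀ t) * (2 * (α0 + γ₀ t)) -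
        β0 * (δ0 + ε₀ t) * (2 * deriv γ₀ t)) / (2 * (α0 + γ₀ t)) ^ 2)) t := by
    rw [hεf]
    exact ((HE.const_mul β0).div H2A h2A).const_sub ε0
  -- κ
  have hκf : κ = fun s => κ0 + κ₀ s - (δ0 + ε₀ s) ^ 2 / (4 * (α0 + γ₀ s)) := funext hκ
  have Hκ : HasDerivAt κ
      (deriv κ₀ t - ((2 : ℕ) * (δ0 + ε₀ t) ^ 1 * deriv ε₀ t * (4 * (α0 + γ₀ t)) -
        (δ0 + ε₀ t) ^ 2 * (4 * deriv γ₀ t)) / (4 * (α0 + γ₀ t)) ^ 2) t := by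
    rw [hκf]
    exact (Hκ₀.const_add κ0).sub ((HE.pow 2).div H4A h4A)
  have hμt : μ t ≠ 0 := by
    rw [hμ t]
    exact mul_ne_zero (mul_ne_zero (mul_ne_zero (by norm_num) hμ0ne) hμ₀t) hA
  refine ⟨⟨Hμ.differentiableAt, Hα.differentiableAt, Hβ.differentiableAt,
    Hγ.differentiableAt, Hδ.differentiableAt, Hε.differentiableAt, Hκ.differentiableAt⟩,
    ?_, ?_, ?_, ?_, ?_, ?_, ?_⟩
  · rw [Hμ.deriv, hμ t, hα t, hm, hga]
    field_simp
    ring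
  · rw [Hα.deriv, hα t, hal, hbe, hga]
    field_simp
    ring
  · rw [Hβ.deriv, hβ t, hα t, hbe, hga]
    field_simp
    ring
  · rw [Hγ.deriv, hβ t, hga]
    field_simp
    ring
  · rw [Hδ.deriv, hδ t, hα t, hde, hbe, hep, hga]
    field_simp
    ring
  · rw [Hε.deriv, hδ t, hβ t, hep, hga]
    field_simp
    ring
  · rw [Hκ.deriv, hδ t, hka, hep, hga]
    field_simp
    ring
end

section
/- Let I be a set, let μ₀, α₀, β₀, γ₀, δ₀, ε₀, κ₀ : I → ℝ be functions, let μ⁰, α⁰, β⁰, γ⁰, δ⁰, ε⁰, κ⁰ ∈ ℝ be constants with μ⁰ ≠ 0 and β⁰ ≠ 0, and suppose α⁰ + γ₀(t) ≠ 0 for all t ∈ I. Define on I: μ = −2μ⁰μ₀(α⁰ + γ₀), α = α₀ − β₀²/(4(α⁰ + γ₀)), β = −β⁰β₀/(2(α⁰ + γ₀)), γ = γ⁰ − (β⁰)²/(4(α⁰ + γ₀)), δ = δ₀ − β₀(δ⁰ + ε₀)/(2(α⁰ + γ₀)), ε = ε⁰ − β⁰(δ⁰ + ε₀)/(2(α⁰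 + γ₀)), κ = κ⁰ + κ₀ − (δ⁰ + ε₀)²/(4(α⁰ + γ₀)). Then for every t ∈ I: γ(t) − γ⁰ ≠ 0, and the inversion formulas hold: μ₀ = 2μ(γ − γ⁰)/(μ⁰(β⁰)²), α₀ = α − β²/(4(γ − γ⁰)), β₀ = β⁰β/(2(γ − γ⁰)), γ₀ = −α⁰ − (β⁰)²/(4(γ − γ⁰)), δ₀ = δ − β(ε − ε⁰)/(2(γ − γ⁰)), ε₀ = −δ⁰ + β⁰(ε − ε⁰)/(2(γ − γ⁰)), and κ₀ = κ − κ⁰ − (ε − ε⁰)²/(4(γ − γ⁰)). -/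
/-- algebraic inversion of the nonlinear superposition formulas for the
Riccati-type system: from the general solution `(μ, α, β, γ, δ, ε, κ)` expressed through
the fundamental solution `(μ₀, α₀, β₀, γ₀, δ₀, ε₀, κ₀)` and initial data, one recovers
the fundamental solution. -/
theorem riccati_superposition_inversion {ι : Type*}
    (μ₀ α₀ β₀ γ₀ δ₀ ε₀ κ₀ : ι → ℝ)
    (μ0 α0 β0 γ0 δ0 ε0 κ0 : ℝ)
    (hμ0ne : μ0 ≠ 0) (hβ0ne : β0 ≠ 0)
    (hαγne : ∀ t, α0 + γ₀ t ≠ 0)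
    (μ α β γ δ ε κ : ι → ℝ)
    (hμ : ∀ t, μ t = -2 * μ0 * μ₀ t * (α0 + γ₀ t))
    (hα : ∀ t, α t = α₀ t - (β₀ t) ^ 2 / (4 * (α0 + γ₀ t)))
    (hβ : ∀ t, β t = -(β0 * β₀ t) / (2 * (α0 + γ₀ t)))
    (hγ : ∀ t, γ t = γ0 - β0 ^ 2 / (4 * (α0 + γ₀ t)))
    (hδ : ∀ t, δ t = δ₀ t - β₀ t * (δ0 + ε₀ t) / (2 * (α0 + γ₀ t)))
    (hε : ∀ t, ε t = ε0 - β0 * (δ0 + ε₀ t) / (2 * (α0 + γ₀ t)))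
    (hκ : ∀ t, κ t = κ0 + κ₀ t - (δ0 + ε₀ t) ^ 2 / (4 * (α0 + γ₀ t))) :
    ∀ t,
      γ t - γ0 ≠ 0 ∧
      μ₀ t = 2 * μ t * (γ t - γ0) / (μ0 * β0 ^ 2) ∧
      α₀ t = α t - (β t) ^ 2 / (4 * (γ t - γ0)) ∧
      β₀ t = β0 * β t / (2 * (γ t - γ0)) ∧
      γ₀ t = -α0 - β0 ^ 2 / (4 * (γ t - γ0)) ∧
      δ₀ t = δ t - β t * (ε t - ε0) / (2 * (γ t - γ0)) ∧
      ε₀ t = -δ0 + β0 * (ε t - ε0) / (2 * (γ t - γ0)) ∧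
      κ₀ t = κ t - κ0 - (ε t - ε0) ^ 2 / (4 * (γ t - γ0)) := by
  intro t
  have hA := hαγne t
  have hγγ : γ t - γ0 = -(β0 ^ 2) / (4 * (α0 + γ₀ t)) := by
    rw [hγ t]; field_simp; ring
  have hne : γ t - γ0 ≠ 0 := by
    rw [hγγ]
    exact div_ne_zero (neg_ne_zero.mpr (pow_ne_zero _ hβ0ne)) (by positivity)
  refine ⟨hne, ?_, ?_, ?_, ?_, ?_, ?_, ?_⟩ <;>
    rw [hγγ] <;>
    [rw [hμ t]; rw [hα t, hβ t]; rw [hβ t]; skip; rw [hδ t, hβ t, hε t];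
      rw [hε t]; rw [hκ t, hε t]] <;>
    field_simp <;>
    ring
end

section
/- Let a, c, d : ℝ → ℝ with a twice continuously differentiable, a(0) ≠ 0, c and d continuous, and let μ₀ be a twice continuously differentiable solution of the characteristic equation μ₀'' − τ(t)μ₀' − 4σ(t)μ₀ = 0 (with τ = a'/a + 2c − 4d, σ = ab + cd − d² + a'd/(2a) − d'/2 for given continuous b and differentiable d, a nonvanishing near 0) subject to μ₀(0) = 0, μ₀'(0) = 2a(0). Define α₀ = −μ₀'/(4aμ₀) − d/(2a), h(t) = exp(∫₀ᵗ(c − 2d)ds), β₀ = h/μ₀, and γ₀ by γ₀(0⁺) determined by γ₀' = aβ₀² together with γ₀(t) = d(0)/(2a(0)) − a h²/(μ₀μ₀') − 4∫₀ᵗ aσh²/(μ₀')² ds. Then as t → 0⁺: lim (α₀(t) + 1/(4a(0)t)) = −c(0)/(4a(0)) + a'(0)/(8a²(0)), lim (β₀(t) − 1/(2a(0)t)) = −a'(0)/(4a²(0)), and lim (γ₀(t) + 1/(4a(0)t)) = c(0)/(4a(0)) + a'(0)/(8a²(0)). -/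
open Filter

private lemma slope_tendsto_right {f : ℝ → ℝ} {L : ℝ} (hf : HasDerivAt f L 0) (h0 : f 0 = 0) :
    Tendsto (fun t => f t / t) (nhdsWithin 0 (Set.Ioi 0)) (nhds L) := by
  have h1 := hasDerivAt_iff_tendsto_slope.mp hf
  have h2 : Tendsto (slope f 0) (nhdsWithin 0 (Set.Ioi 0)) (nhds L) :=
    h1.mono_left (nhdsWithin_mono 0 (fun x hx => ne_of_gt hx))
  refine h2.congr (fun t => ?_)
  simp [slope_def_field, h0]

set_option maxHeartbeats 1000000 in
/-- small-time asymptotics of the fundamental solution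
`α₀(t) = −1/(4a(0)t) − c(0)/(4a(0)) + a'(0)/(8a²(0)) + O(t)`,
`β₀(t) = 1/(2a(0)t) − a'(0)/(4a²(0)) + O(t)`,
`γ₀(t) = −1/(4a(0)t) + c(0)/(4a(0)) + a'(0)/(8a²(0)) + O(t)` as `t → 0⁺`,
stated as limits of the regularized quantities. -/
theorem fundamental_solution_small_time_asymptotics
    (a b c d μ₀ : ℝ → ℝ)
    (ha : ContDiff ℝ 2 a) (ha0 : a 0 ≠ 0)
    (hane : ∀ᶠ t in nhds (0 : ℝ), a t ≠ 0)
    (hb : Continuous b) (hccont : Continuous c) (hdcont : Continuous d)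
    (hddiff : Differentiable ℝ d)
    (hμ₀ : ContDiff ℝ 2 μ₀)
    (σ : ℝ → ℝ)
    (hσ : ∀ t, σ t = a t * b t + c t * d t - (d t) ^ 2
        + deriv a t * d t / (2 * a t) - deriv d t / 2)
    (hchar : ∀ t,
      deriv (deriv μ₀) t
        - (deriv a t / a t + 2 * c t - 4 * d t) * deriv μ₀ t
        - 4 * σ t * μ₀ t = 0)
    (hμ₀0 : μ₀ 0 = 0) (hμ₀'0 : deriv μ₀ 0 = 2 * a 0)
    (α₀ h β₀ γ₀ : ℝ → ℝ)
    (hα₀ : ∀ t, α₀ t = -(deriv μ₀ t) / (4 * a t * μ₀ t) - d t / (2 * a t))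
    (hh : ∀ t, h t = Real.exp (∫ s in (0 : ℝ)..t, (c s - 2 * d s)))
    (hβ₀ : ∀ t, β₀ t = h t / μ₀ t)
    (hγ₀ : ∀ t, γ₀ t = d 0 / (2 * a 0)
        - a t * (h t) ^ 2 / (μ₀ t * deriv μ₀ t)
        - 4 * ∫ s in (0 : ℝ)..t, a s * σ s * (h s) ^ 2 / (deriv μ₀ s) ^ 2) :
    Tendsto (fun t => α₀ t + 1 / (4 * a 0 * t)) (nhdsWithin 0 (Set.Ioi 0))
      (nhds (-(c 0) / (4 * a 0) + deriv a 0 / (8 * (a 0) ^ 2))) ∧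
    Tendsto (fun t => β₀ t - 1 / (2 * a 0 * t)) (nhdsWithin 0 (Set.Ioi 0))
      (nhds (-(deriv a 0) / (4 * (a 0) ^ 2))) ∧
    Tendsto (fun t => γ₀ t + 1 / (4 * a 0 * t)) (nhdsWithin 0 (Set.Ioi 0))
      (nhds (c 0 / (4 * a 0) + deriv a 0 / (8 * (a 0) ^ 2))) := by
  set l := nhdsWithin (0:ℝ) (Set.Ioi 0) with hl
  -- differentiability facts
  have haD : Differentiable ℝ a := ha.differentiable two_ne_zero
  have hμD : Differentiable ℝ μ₀ := hμ₀.differentiable two_ne_zero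
  have hμ'C1 : ContDiff ℝ 1 (deriv μ₀) := by
    have h2 : ContDiff ℝ (1+1) μ₀ := by norm_num [hμ₀]
    exact (contDiff_succ_iff_deriv.mp h2).2.2
  have hμ'D : Differentiable ℝ (deriv μ₀) := hμ'C1.differentiable one_ne_zero
  have hμ'cont : Continuous (deriv μ₀) := hμ'C1.continuous
  have hμcont : Continuous μ₀ := hμD.continuous
  have hacont : Continuous a := haD.continuous
  -- second derivative value
  have hM2 : deriv (deriv μ₀) 0 = 2 * deriv a 0 + 4 * a 0 * c 0 - 8 * a 0 * d 0 := by
    have h0 := hchar 0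
    rw [hμ₀0, hμ₀'0] at h0
    have h1 : deriv (deriv μ₀) 0 = (deriv a 0 / a 0 + 2 * c 0 - 4 * d 0) * (2 * a 0) := by
      linarith
    rw [h1]; field_simp; ring
  -- basic derivatives
  have hda0 : HasDerivAt a (deriv a 0) 0 := (haD 0).hasDerivAt
  have hdμ0 : HasDerivAt μ₀ (2 * a 0) 0 := hμ₀'0 ▸ (hμD 0).hasDerivAt
  have hdμ'0 : HasDerivAt (deriv μ₀) (deriv (deriv μ₀) 0) 0 := (hμ'D 0).hasDerivAt
  have hcd : Continuous (fun s => c s - 2 * d s) := hccont.sub (continuous_const.mul hdcont)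
  have hdh : HasDerivAt h (c 0 - 2 * d 0) 0 := by
    have hF : HasDerivAt (fun u => ∫ s in (0:ℝ)..u, (c s - 2 * d s)) (c 0 - 2 * d 0) 0 :=
      intervalIntegral.integral_hasDerivAt_right (hcd.intervalIntegrable 0 0)
        (hcd.stronglyMeasurable.stronglyMeasurableAtFilter) hcd.continuousAt
    have := hF.exp
    have heq : h = fun u => Real.exp (∫ s in (0:ℝ)..u, (c s - 2 * d s)) := funext hh
    rw [heq]
    simpa using this
  have hh0 : h 0 = 1 := by rw [hh]; simp
  -- eventual facts
  have ht_pos : ∀ᶠ t in l, (0:ℝ) < t := self_mem_nhdsWithin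
  have hane' : ∀ᶠ t in l, a t ≠ 0 := hane.filter_mono nhdsWithin_le_nhds
  -- limit of μ₀ t / t
  have L1 : Tendsto (fun t => μ₀ t / t) l (nhds (2 * a 0)) := slope_tendsto_right hdμ0 hμ₀0
  have h2a0 : (2: ℝ) * a 0 ≠ 0 := mul_ne_zero two_ne_zero ha0
  have hμne : ∀ᶠ t in l, μ₀ t ≠ 0 := by
    filter_upwards [L1.eventually_ne h2a0] with t ht hz
    exact ht (by rw [hz]; simp)
  have hμ'ne : ∀ᶠ t in l, deriv μ₀ t ≠ 0 := by
    have h2 : ∀ᶠ t in nhds (0:ℝ), deriv μ₀ t ≠ 0 :=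
      hμ'cont.continuousAt.eventually_ne (by rw [hμ₀'0]; exact h2a0)
    exact h2.filter_mono nhdsWithin_le_nhds
  -- continuity-type limits
  have Ta : Tendsto a l (nhds (a 0)) := hacont.continuousAt.tendsto.mono_left nhdsWithin_le_nhds
  have Td : Tendsto d l (nhds (d 0)) := hdcont.continuousAt.tendsto.mono_left nhdsWithin_le_nhds
  have Tμ' : Tendsto (deriv μ₀) l (nhds (2 * a 0)) :=
    hμ₀'0 ▸ hμ'cont.continuousAt.tendsto.mono_left nhdsWithin_le_nhds
  -- slope limits
  have L2 : Tendsto (fun t => (h t - 1) / t) l (nhds (c 0 - 2 * d 0)) :=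
    slope_tendsto_right (hdh.sub_const 1) (by rw [hh0]; ring)
  have L3 : Tendsto (fun t => (2 * a t - deriv μ₀ t) / t) l
      (nhds (2 * deriv a 0 - deriv (deriv μ₀) 0)) :=
    slope_tendsto_right ((hda0.const_mul 2).sub hdμ'0) (by rw [hμ₀'0]; ring)
  have hdG : HasDerivAt (fun t => deriv μ₀ t - 2 * a t * (h t) ^ 2)
      (deriv (deriv μ₀) 0 - (2 * deriv a 0 + 4 * a 0 * (c 0 - 2 * d 0))) 0 := by
    have h1 := (hda0.const_mul 2).fun_mul (hdh.fun_pow 2)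
    have h2 := hdμ'0.fun_sub h1
    refine h2.congr_deriv ?_
    rw [hh0]
    push_cast
    ring
  have L4 : Tendsto (fun t => (deriv μ₀ t - 2 * a t * (h t) ^ 2) / t) l
      (nhds (deriv (deriv μ₀) 0 - (2 * deriv a 0 + 4 * a 0 * (c 0 - 2 * d 0)))) :=
    slope_tendsto_right hdG (by rw [hμ₀'0, hh0]; ring)
  -- L'Hopital limit
  have L5 : Tendsto (fun t => (μ₀ t - 2 * a 0 * t) / t ^ 2) l (nhds (deriv (deriv μ₀) 0 / 2)) := by
    have hs : Tendsto (fun t => (deriv μ₀ t - 2 * a 0) / t) l (nhds (deriv (deriv μ₀) 0)) :=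
      slope_tendsto_right (hdμ'0.sub_const _) (by rw [hμ₀'0]; ring)
    apply HasDerivAt.lhopital_zero_nhdsGT
      (f' := fun t => deriv μ₀ t - 2 * a 0) (g' := fun t => 2 * t)
    · exact Eventually.of_forall (fun x => by
        simpa using (hμD x).hasDerivAt.fun_sub ((hasDerivAt_id x).const_mul (2 * a 0)))
    · exact Eventually.of_forall (fun x => by simpa using hasDerivAt_pow 2 x)
    · filter_upwards [ht_pos] with t ht
      exact mul_ne_zero two_ne_zero (ne_of_gt ht)
    · have : Tendsto (fun t => μ₀ t - 2 * a 0 * t) l (nhds (μ₀ 0 - 2 * a 0 * 0)) :=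
        ((hμcont.sub (continuous_const.mul continuous_id)).tendsto 0).mono_left
          nhdsWithin_le_nhds
      simpa [hμ₀0] using this
    · have : Tendsto (fun t : ℝ => t ^ 2) l (nhds ((0:ℝ) ^ 2)) :=
        ((continuous_pow 2).tendsto 0).mono_left nhdsWithin_le_nhds
      simpa using this
    · refine (hs.div_const 2).congr (fun t => ?_)
      rw [div_div]
      ring
  -- ============ β₀ ============
  have hβlim : Tendsto
      (fun t => (2 * a 0 * ((h t - 1) / t) - (μ₀ t - 2 * a 0 * t) / t ^ 2)
        / (2 * a 0 * (μ₀ t / t))) l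
      (nhds ((2 * a 0 * (c 0 - 2 * d 0) - deriv (deriv μ₀) 0 / 2)
        / (2 * a 0 * (2 * a 0)))) :=
    ((L2.const_mul _).sub L5).div (L1.const_mul _) (by
      exact mul_ne_zero h2a0 h2a0)
  have hβc : (2 * a 0 * (c 0 - 2 * d 0) - deriv (deriv μ₀) 0 / 2) / (2 * a 0 * (2 * a 0))
      = -(deriv a 0) / (4 * (a 0) ^ 2) := by
    rw [hM2]; field_simp; ring
  have hβ : Tendsto (fun t => β₀ t - 1 / (2 * a 0 * t)) l
      (nhds (-(deriv a 0) / (4 * (a 0) ^ 2))) := by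
    rw [← hβc]
    refine Tendsto.congr' ?_ hβlim
    filter_upwards [ht_pos, hμne] with t ht hμ
    rw [hβ₀ t]
    have htne : t ≠ 0 := ne_of_gt ht
    field_simp
    ring
  -- ============ α₀ ============
  have hαlim : Tendsto
      (fun t => (a t * ((μ₀ t - 2 * a 0 * t) / t ^ 2)
          + a 0 * ((2 * a t - deriv μ₀ t) / t))
        / (4 * a 0 * a t * (μ₀ t / t)) - d t / (2 * a t)) l
      (nhds ((a 0 * (deriv (deriv μ₀) 0 / 2)
          + a 0 * (2 * deriv a 0 - deriv (deriv μ₀) 0))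
        / (4 * a 0 * a 0 * (2 * a 0)) - d 0 / (2 * a 0))) := by
    have hden : Tendsto (fun t => 4 * a 0 * a t * (μ₀ t / t)) l
        (nhds (4 * a 0 * a 0 * (2 * a 0))) := by
      have : Tendsto (fun t => 4 * a 0 * a t) l (nhds (4 * a 0 * a 0)) := Ta.const_mul _
      exact this.mul L1
    have hnum : Tendsto (fun t => a t * ((μ₀ t - 2 * a 0 * t) / t ^ 2)
        + a 0 * ((2 * a t - deriv μ₀ t) / t)) l
        (nhds (a 0 * (deriv (deriv μ₀) 0 / 2)
          + a 0 * (2 * deriv a 0 - deriv (deriv μ₀) 0))) :=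
      (Ta.mul L5).add (L3.const_mul _)
    exact (hnum.div hden (by
      exact mul_ne_zero (mul_ne_zero (mul_ne_zero four_ne_zero ha0) ha0) h2a0)).sub
      (Td.div (Ta.const_mul 2) h2a0)
  have hαc : (a 0 * (deriv (deriv μ₀) 0 / 2)
          + a 0 * (2 * deriv a 0 - deriv (deriv μ₀) 0))
        / (4 * a 0 * a 0 * (2 * a 0)) - d 0 / (2 * a 0)
      = -(c 0) / (4 * a 0) + deriv a 0 / (8 * (a 0) ^ 2) := by
    rw [hM2]; field_simp; ring
  have hα : Tendsto (fun t => α₀ t + 1 / (4 * a 0 * t)) l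
      (nhds (-(c 0) / (4 * a 0) + deriv a 0 / (8 * (a 0) ^ 2))) := by
    rw [← hαc]
    refine Tendsto.congr' ?_ hαlim
    filter_upwards [ht_pos, hμne, hane'] with t ht hμ hat
    rw [hα₀ t]
    have htne : t ≠ 0 := ne_of_gt ht
    field_simp
    ring
  -- ============ γ₀ ============
  have hP : Tendsto (fun t => ∫ s in (0:ℝ)..t, a s * σ s * (h s) ^ 2 / (deriv μ₀ s) ^ 2) l
      (nhds 0) := by
    set F : ℝ → ℝ := fun s => a s * σ s * (h s) ^ 2 / (deriv μ₀ s) ^ 2 with hFdef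
    by_cases hint : ∃ ε > (0:ℝ), IntervalIntegrable F MeasureTheory.volume 0 ε
    · obtain ⟨ε, hε, hI⟩ := hint
      have hI' : MeasureTheory.IntegrableOn F (Set.uIcc 0 ε) MeasureTheory.volume := by
        rw [Set.uIcc_of_le hε.le]
        exact (intervalIntegrable_iff_integrableOn_Icc_of_le hε.le).mp hI
      have hcontP : ContinuousOn (fun x => ∫ s in (0:ℝ)..x, F s) (Set.uIcc 0 ε) :=
        intervalIntegral.continuousOn_primitive_interval hI'
      have h0mem : (0:ℝ) ∈ Set.uIcc 0 ε := Set.left_mem_uIcc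
      have hcw : Tendsto (fun x => ∫ s in (0:ℝ)..x, F s)
          (nhdsWithin 0 (Set.uIcc 0 ε)) (nhds 0) := by
        have := (hcontP 0 h0mem).tendsto
        simpa using this
      refine hcw.mono_left (nhdsWithin_le_of_mem ?_)
      refine Filter.mem_of_superset (Ioo_mem_nhdsGT_of_mem ⟨le_refl 0, hε⟩) ?_
      rw [Set.uIcc_of_le hε.le]
      exact Set.Ioo_subset_Icc_self
    · push_neg at hint
      have hz : ∀ᶠ t in l, (∫ s in (0:ℝ)..t, F s) = 0 := by
        filter_upwards [ht_pos] with t ht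
        exact intervalIntegral.integral_undef (hint t ht)
      exact Tendsto.congr' (hz.mono fun t h => h.symm) tendsto_const_nhds
  have hγlim : Tendsto
      (fun t => d 0 / (2 * a 0)
        + (((μ₀ t - 2 * a 0 * t) / t ^ 2) * deriv μ₀ t
            + 2 * a 0 * ((deriv μ₀ t - 2 * a t * (h t) ^ 2) / t))
          / (4 * a 0 * (μ₀ t / t) * deriv μ₀ t)
        - 4 * ∫ s in (0:ℝ)..t, a s * σ s * (h s) ^ 2 / (deriv μ₀ s) ^ 2) l
      (nhds (d 0 / (2 * a 0)
        + ((deriv (deriv μ₀) 0 / 2) * (2 * a 0)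
            + 2 * a 0 * (deriv (deriv μ₀) 0
              - (2 * deriv a 0 + 4 * a 0 * (c 0 - 2 * d 0))))
          / (4 * a 0 * (2 * a 0) * (2 * a 0))
        - 4 * 0)) := by
    have hden : Tendsto (fun t => 4 * a 0 * (μ₀ t / t) * deriv μ₀ t) l
        (nhds (4 * a 0 * (2 * a 0) * (2 * a 0))) := (L1.const_mul _).mul Tμ'
    have hnum : Tendsto (fun t => ((μ₀ t - 2 * a 0 * t) / t ^ 2) * deriv μ₀ t
        + 2 * a 0 * ((deriv μ₀ t - 2 * a t * (h t) ^ 2) / t)) l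
        (nhds ((deriv (deriv μ₀) 0 / 2) * (2 * a 0)
          + 2 * a 0 * (deriv (deriv μ₀) 0
            - (2 * deriv a 0 + 4 * a 0 * (c 0 - 2 * d 0))))) :=
      (L5.mul Tμ').add (L4.const_mul _)
    exact (tendsto_const_nhds.add (hnum.div hden (by
      exact mul_ne_zero (mul_ne_zero (mul_ne_zero four_ne_zero ha0) h2a0) h2a0))).sub
      (hP.const_mul 4)
  have hγc : d 0 / (2 * a 0)
        + ((deriv (deriv μ₀) 0 / 2) * (2 * a 0)
            + 2 * a 0 * (deriv (deriv μ₀) 0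
              - (2 * deriv a 0 + 4 * a 0 * (c 0 - 2 * d 0))))
          / (4 * a 0 * (2 * a 0) * (2 * a 0))
        - 4 * 0
      = c 0 / (4 * a 0) + deriv a 0 / (8 * (a 0) ^ 2) := by
    rw [hM2]; field_simp; ring
  have hγ : Tendsto (fun t => γ₀ t + 1 / (4 * a 0 * t)) l
      (nhds (c 0 / (4 * a 0) + deriv a 0 / (8 * (a 0) ^ 2))) := by
    rw [← hγc]
    refine Tendsto.congr' ?_ hγlim
    filter_upwards [ht_pos, hμne, hμ'ne] with t ht hμ hμ'
    rw [hγ₀ t]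
    have htne : t ≠ 0 := ne_of_gt ht
    have key : 1 / (4 * a 0 * t) - a t * (h t) ^ 2 / (μ₀ t * deriv μ₀ t)
        = (((μ₀ t - 2 * a 0 * t) / t ^ 2) * deriv μ₀ t
            + 2 * a 0 * ((deriv μ₀ t - 2 * a t * (h t) ^ 2) / t))
          / (4 * a 0 * (μ₀ t / t) * deriv μ₀ t) := by
      field_simp
      ring
    linarith
  exact ⟨hα, hβ, hγ⟩
end

section
/- Let a₀ ≠ 0 and let μ₀, α₀, β₀, γ₀ : (0,T) → ℝ be functions such that, as t → 0⁺, μ₀(t) = 2a₀t + O(t²), α₀(t) = −1/(4a₀t) + A + O(t), β₀(t) = 1/(2a₀t) + B + O(t), γ₀(t) = −1/(4a₀t) + C + O(t) for some constants A, B, C. Let μ⁰, α⁰ ∈ ℝ with μ⁰ ≠ 0, and suppose α⁰ + γ₀(t) ≠ 0 on (0,T). Define μ(t) = −2μ⁰μ₀(t)(α⁰ + γ₀(t)) and α(t) = α₀(t) − β₀²(t)/(4(α⁰ + γ₀(t))). Then lim_{t→0⁺} μ(t) = μ⁰, and if in addition A = −c₀/(4a₀) + a₁/(8a₀²), B = −a₁/(4a₀²),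 C = c₀/(4a₀) + a₁/(8a₀²) for some constants a₁, c₀, then lim_{t→0⁺} α(t) = α⁰. -/
set_option maxHeartbeats 1600000


open Filter Asymptotics

/-- continuity with respect to initial data of the superposition formulas:
given the small-time asymptotics of the fundamental solution, `μ(t) = −2μ⁰μ₀(t)(α⁰ + γ₀(t))`
tends to `μ⁰` as `t → 0⁺`, and, if the constants `A`, `B`, `C` satisfy the consistency
relations `A = −c₀/(4a₀) + a₁/(8a₀²)`, `B = −a₁/(4a₀²)`, `C = c₀/(4a₀) + a₁/(8a₀²)`
for some constants `a₁, c₀`, then `α(t) = α₀(t) − β₀²(t)/(4(α⁰ + γ₀(t)))` tends to `α⁰`. -/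
theorem superposition_continuity_at_initial_data
    (T a₀ A B C : ℝ) (hT : 0 < T) (ha₀ : a₀ ≠ 0)
    (μ₀ α₀ β₀ γ₀ : ℝ → ℝ)
    (hμ₀asymp : (fun t => μ₀ t - 2 * a₀ * t) =O[nhdsWithin 0 (Set.Ioo 0 T)]
      fun t => t ^ 2)
    (hα₀asymp : (fun t => α₀ t - (-(1 / (4 * a₀ * t)) + A)) =O[nhdsWithin 0 (Set.Ioo 0 T)]
      fun t => t)
    (hβ₀asymp : (fun t => β₀ t - (1 / (2 * a₀ * t) + B)) =O[nhdsWithin 0 (Set.Ioo 0 T)]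
      fun t => t)
    (hγ₀asymp : (fun t => γ₀ t - (-(1 / (4 * a₀ * t)) + C)) =O[nhdsWithin 0 (Set.Ioo 0 T)]
      fun t => t)
    (μ0 α0 : ℝ) (hμ0 : μ0 ≠ 0)
    (hαγne : ∀ t ∈ Set.Ioo (0 : ℝ) T, α0 + γ₀ t ≠ 0)
    (μ α : ℝ → ℝ)
    (hμ : ∀ t, μ t = -2 * μ0 * μ₀ t * (α0 + γ₀ t))
    (hα : ∀ t, α t = α₀ t - (β₀ t) ^ 2 / (4 * (α0 + γ₀ t))) :
    Tendsto μ (nhdsWithin 0 (Set.Ioo 0 T)) (nhds μ0) ∧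
    (∀ a₁ c₀ : ℝ,
      A = -c₀ / (4 * a₀) + a₁ / (8 * a₀ ^ 2) →
      B = -a₁ / (4 * a₀ ^ 2) →
      C = c₀ / (4 * a₀) + a₁ / (8 * a₀ ^ 2) →
      Tendsto α (nhdsWithin 0 (Set.Ioo 0 T)) (nhds α0)) := by
  set l := nhdsWithin (0:ℝ) (Set.Ioo 0 T) with hldef
  have hmem : ∀ᶠ t in l, t ∈ Set.Ioo (0:ℝ) T := self_mem_nhdsWithin
  have htend : Tendsto (fun t : ℝ => t) l (nhds 0) :=
    tendsto_id.mono_left nhdsWithin_le_nhds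
  set εα := fun t => α₀ t - (-(1 / (4 * a₀ * t)) + A) with hεα_def
  set εβ := fun t => β₀ t - (1 / (2 * a₀ * t) + B) with hεβ_def
  set εγ := fun t => γ₀ t - (-(1 / (4 * a₀ * t)) + C) with hεγ_def
  have hεα : Tendsto εα l (nhds 0) := hα₀asymp.trans_tendsto htend
  have hεβ : Tendsto εβ l (nhds 0) := hβ₀asymp.trans_tendsto htend
  have hεγ : Tendsto εγ l (nhds 0) := hγ₀asymp.trans_tendsto htend
  have hεμ : Tendsto (fun t => (μ₀ t - 2 * a₀ * t) * t⁻¹) l (nhds 0) := by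
    have h1 : (fun t => (μ₀ t - 2 * a₀ * t) * t⁻¹) =O[l] fun t : ℝ => t := by
      refine (hμ₀asymp.mul (isBigO_refl (fun t : ℝ => t⁻¹) l)).congr' .rfl ?_
      filter_upwards [hmem] with t ht
      have h0 : t ≠ 0 := ne_of_gt ht.1
      field_simp
    exact h1.trans_tendsto htend
  have hw : Tendsto (fun t => t * (α0 + γ₀ t)) l (nhds (-(1/(4*a₀)))) := by
    have heq : ∀ᶠ t in l, α0 * t + (-(1/(4*a₀)) + C * t + t * εγ t) = t * (α0 + γ₀ t) := by
      filter_upwards [hmem] with t ht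
      have h0 : t ≠ 0 := ne_of_gt ht.1
      simp only [hεγ_def]
      field_simp
      ring
    have h2 : Tendsto (fun t => α0 * t + (-(1/(4*a₀)) + C * t + t * εγ t)) l
        (nhds (α0 * 0 + (-(1/(4*a₀)) + C * 0 + 0 * 0))) :=
      (tendsto_const_nhds.mul htend).add
        ((tendsto_const_nhds.add (tendsto_const_nhds.mul htend)).add (htend.mul hεγ))
    simp only [mul_zero, zero_mul, add_zero, zero_add] at h2
    exact h2.congr' heq
  constructor
  · have heq : ∀ᶠ t in l,
        (-2*μ0) * ((2*a₀ + (μ₀ t - 2 * a₀ * t) * t⁻¹) * (t * (α0 + γ₀ t))) = μ t := by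
      filter_upwards [hmem] with t ht
      rw [hμ t]
      have h0 : t ≠ 0 := ne_of_gt ht.1
      field_simp
      ring
    have h2 : Tendsto (fun t => (-2*μ0) * ((2*a₀ + (μ₀ t - 2 * a₀ * t) * t⁻¹) * (t * (α0 + γ₀ t))))
        l (nhds ((-2*μ0) * ((2*a₀ + 0) * (-(1/(4*a₀)))))) :=
      tendsto_const_nhds.mul ((tendsto_const_nhds.add hεμ).mul hw)
    have hval : (-2*μ0) * ((2*a₀ + 0) * (-(1/(4*a₀)))) = μ0 := by
      field_simp
      ring
    exact hval ▸ h2.congr' heq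
  · intro a₁ c₀ hA hB hC
    have habc : A + B + C = 0 := by
      rw [hA, hB, hC]; field_simp; ring
    set tN := fun t => -(1/a₀) * (εα t + εβ t + εγ t + (A+B+C))
        + 4*t*(A + εα t - α0)*((α0+C) + εγ t) - t*(B + εβ t)^2 with htN_def
    have hNlim : Tendsto tN l (nhds 0) := by
      have h2 : Tendsto tN l (nhds (-(1/a₀) * (0 + 0 + 0 + (A+B+C))
          + 4*0*(A + 0 - α0)*((α0+C) + 0) - 0*(B + 0)^2)) := by
        refine Tendsto.sub (Tendsto.add ?_ ?_) ?_
        · exact tendsto_const_nhds.mul (((hεα.add hεβ).add hεγ).add tendsto_const_nhds)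
        · exact ((tendsto_const_nhds.mul htend).mul
            ((tendsto_const_nhds.add hεα).sub tendsto_const_nhds)).mul
            (tendsto_const_nhds.add hεγ)
        · exact htend.mul ((tendsto_const_nhds.add hεβ).pow 2)
      simpa [habc] using h2
    have heq : ∀ᶠ t in l, α0 + tN t / (4 * (t * (α0 + γ₀ t))) = α t := by
      filter_upwards [hmem] with t ht
      have h0 : t ≠ 0 := ne_of_gt ht.1
      have hG : α0 + γ₀ t ≠ 0 := hαγne t ht
      rw [hα t, htN_def]
      simp only [hεα_def, hεβ_def, hεγ_def]
      set x := α₀ t with hx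
      set y := β₀ t with hy
      set z := γ₀ t with hz
      field_simp
      ring
    have hden : (4 : ℝ) * (-(1/(4*a₀))) ≠ 0 := by
      field_simp
      exact neg_ne_zero.mpr (one_div_ne_zero ha₀)
    have h2 : Tendsto (fun t => α0 + tN t / (4 * (t * (α0 + γ₀ t)))) l
        (nhds (α0 + 0 / (4 * (-(1/(4*a₀)))))) :=
      tendsto_const_nhds.add (hNlim.div (tendsto_const_nhds.mul hw) hden)
    simpa using h2.congr' heq
end

section
/- Let a, b, c, d, f, g : ℝ → ℝ be functions of t, and let u : ℝ × ℝ → ℝ be a function of (x,t) that is three times continuously differentiable in x and once in t, with the mixed partial derivatives u_{tx} and u_{xt} existing and equal, and u(x,t) ≠ 0 everywhere on an open set Ω ⊆ ℝ². Define v = −2 u_x/u (the Cole–Hopf transformation) and Qu = a u_xx − (g − cx) u_x + (d + fx − bx²) u. Then the identity v_t + a(v v_x − v_xx) + (g − cx) v_x − c v + 2(f − 2bx) = −2 ∂/∂x [ (u_t − Qu)/u ] holds on Ω. -/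
/-- Cole–Hopf identity: for `v = −2 u_x/u` and
`Qu = a u_xx − (g − cx) u_x + (d + fx − bx²) u`, one has
`v_t + a(v v_x − v_xx) + (g − cx) v_x − c v + 2(f − 2bx) = −2 ∂/∂x [(u_t − Qu)/u]`
on the open set `Ω` where `u ≠ 0`. -/
theorem cole_hopf_identity
    (a b c d f g : ℝ → ℝ) (Ω : Set (ℝ × ℝ)) (hΩ : IsOpen Ω)
    (u ux uxx uxxx ut utx : ℝ → ℝ → ℝ)
    (hune : ∀ x t, (x, t) ∈ Ω → u x t ≠ 0)
    (hux : ∀ x t, (x, t) ∈ Ω → HasDerivAt (fun ξ => u ξ t) (ux x t) x)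
    (huxx : ∀ x t, (x, t) ∈ Ω → HasDerivAt (fun ξ => ux ξ t) (uxx x t) x)
    (huxxx : ∀ x t, (x, t) ∈ Ω → HasDerivAt (fun ξ => uxx ξ t) (uxxx x t) x)
    (hut : ∀ x t, (x, t) ∈ Ω → HasDerivAt (fun s => u x s) (ut x t) t)
    (hutx : ∀ x t, (x, t) ∈ Ω → HasDerivAt (fun ξ => ut ξ t) (utx x t) x)
    (hmixed : ∀ x t, (x, t) ∈ Ω → HasDerivAt (fun s => ux x s) (utx x t) t)
    (hcont : ContinuousOn (fun p : ℝ × ℝ =>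
      (u p.1 p.2, ux p.1 p.2, uxx p.1 p.2, uxxx p.1 p.2, ut p.1 p.2, utx p.1 p.2)) Ω)
    (v : ℝ → ℝ → ℝ)
    (hv : ∀ x t, v x t = -2 * ux x t / u x t) :
    ∀ x t, (x, t) ∈ Ω →
      deriv (fun s => v x s) t
        + a t * (v x t * deriv (fun ξ => v ξ t) x
            - deriv (fun ξ => deriv (fun ξ' => v ξ' t) ξ) x)
        + (g t - c t * x) * deriv (fun ξ => v ξ t) x
        - c t * v x t + 2 * (f t - 2 * b t * x)
      = -2 * deriv (fun ξ =>
          (ut ξ t - (a t * uxx ξ t - (g t - c t * ξ) * ux ξ t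
            + (d t + f t * ξ - b t * ξ ^ 2) * u ξ t)) / u ξ t) x := by
  intro x t hxt
  have hSt : IsOpen {ξ : ℝ | (ξ, t) ∈ Ω} :=
    hΩ.preimage (Continuous.prodMk_left t)
  have hxSt : x ∈ {ξ : ℝ | (ξ, t) ∈ Ω} := hxt
  have hune' := hune x t hxt
  -- first spatial derivative of v at any point of the slice
  have hW : ∀ ξ ∈ {ξ : ℝ | (ξ, t) ∈ Ω},
      HasDerivAt (fun ξ' => v ξ' t)
        (-2 * (uxx ξ t * u ξ t - ux ξ t * ux ξ t) / (u ξ t) ^ 2) ξ := by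
    intro ξ hξ
    have h2 := ((huxx ξ t hξ).const_mul (-2 : ℝ)).fun_div (hux ξ t hξ) (hune ξ t hξ)
    have heq : (fun ξ' => v ξ' t) = fun ξ' => -2 * ux ξ' t / u ξ' t := by
      funext ξ'; exact hv ξ' t
    rw [heq]
    exact h2.congr_deriv (by ring)
  have hvx : deriv (fun ξ => v ξ t) x
      = -2 * (uxx x t * u x t - ux x t * ux x t) / (u x t) ^ 2 :=
    (hW x hxSt).deriv
  -- second spatial derivative
  have hNum : HasDerivAt (fun ξ => -2 * (uxx ξ t * u ξ t - ux ξ t * ux ξ t))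
      (-2 * (uxxx x t * u x t + uxx x t * ux x t
        - (uxx x t * ux x t + ux x t * uxx x t))) x :=
    (((huxxx x t hxt).mul (hux x t hxt)).sub
      ((huxx x t hxt).mul (huxx x t hxt))).const_mul (-2 : ℝ)
  have hDen : HasDerivAt (fun ξ => (u ξ t) ^ 2)
      (2 * u x t * ux x t) x := by
    simpa using (hux x t hxt).fun_pow 2
  have hWd : HasDerivAt
      (fun ξ => -2 * (uxx ξ t * u ξ t - ux ξ t * ux ξ t) / (u ξ t) ^ 2)
      ((-2 * (uxxx x t * u x t + uxx x t * ux x t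
          - (uxx x t * ux x t + ux x t * uxx x t)) * (u x t) ^ 2
        - (-2 * (uxx x t * u x t - ux x t * ux x t))
          * (2 * u x t * ux x t)) / ((u x t) ^ 2) ^ 2) x :=
    hNum.div hDen (pow_ne_zero 2 hune')
  have hvxx : deriv (fun ξ => deriv (fun ξ' => v ξ' t) ξ) x
      = (-2 * (uxxx x t * u x t + uxx x t * ux x t
          - (uxx x t * ux x t + ux x t * uxx x t)) * (u x t) ^ 2
        - (-2 * (uxx x t * u x t - ux x t * ux x t))
          * (2 * u x t * ux x t)) / ((u x t) ^ 2) ^ 2 := by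
    have hev : (fun ξ => deriv (fun ξ' => v ξ' t) ξ)
        =ᶠ[nhds x] (fun ξ => -2 * (uxx ξ t * u ξ t - ux ξ t * ux ξ t) / (u ξ t) ^ 2) :=
      Filter.eventuallyEq_of_mem (hSt.mem_nhds hxSt) (fun ξ hξ => (hW ξ hξ).deriv)
    rw [hev.deriv_eq]
    exact hWd.deriv
  -- time derivative of v
  have hvt : deriv (fun s => v x s) t
      = (-2 * utx x t * u x t - (-2 * ux x t) * ut x t) / (u x t) ^ 2 := by
    have h1 := ((hmixed x t hxt).const_mul (-2 : ℝ)).div (hut x t hxt) hune'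
    have heq : (fun s => v x s) = fun s => -2 * ux x s / u x s := by
      funext s; exact hv x s
    rw [heq]
    exact h1.deriv
  -- right-hand side
  have hgc : HasDerivAt (fun ξ : ℝ => g t - c t * ξ) (-(c t)) x := by
    simpa using ((hasDerivAt_id x).const_mul (c t)).const_sub (g t)
  have hpoly : HasDerivAt (fun ξ : ℝ => d t + f t * ξ - b t * ξ ^ 2)
      (f t - 2 * b t * x) x := by
    have h := (((hasDerivAt_id x).const_mul (f t)).const_add (d t)).fun_sub
      ((hasDerivAt_pow 2 x).const_mul (b t))
    exact h.congr_deriv (by rw [show (2:ℕ) - 1 = 1 from rfl]; push_cast; ring)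
  have hM : HasDerivAt (fun ξ => ut ξ t - (a t * uxx ξ t - (g t - c t * ξ) * ux ξ t
        + (d t + f t * ξ - b t * ξ ^ 2) * u ξ t))
      (utx x t - (a t * uxxx x t
        - (-(c t) * ux x t + (g t - c t * x) * uxx x t)
        + ((f t - 2 * b t * x) * u x t
          + (d t + f t * x - b t * x ^ 2) * ux x t))) x :=
    (hutx x t hxt).sub ((((huxxx x t hxt).const_mul (a t)).sub
      (hgc.mul (huxx x t hxt))).add (hpoly.mul (hux x t hxt)))
  have hF := hM.fun_div (hux x t hxt) hune'
  rw [hvt, hvxx, hvx, hF.deriv, hv x t]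
  field_simp
  ring
end

section
/- Let a, b, c, d, f, g : ℝ → ℝ be functions of t, and let u : ℝ × ℝ → ℝ be positive on an open set Ω ⊆ ℝ², three times continuously differentiable in x and once in t with equal mixed partials u_{tx} = u_{xt}, and suppose u satisfies the diffusion-type equation u_t = a u_xx − (g − cx) u_x + (d + fx − bx²) u on Ω. Then v = −2 u_x/u satisfies the nonautonomous Burgers-type equation v_t + a(v v_x − v_xx) − c(x v_x + v) + g v_x = 2(2bx − f) on Ω. -/
/-- if `u > 0` satisfies the diffusion-type equation
`u_t = a u_xx − (g − cx) u_x + (d + fx − bx²) u` on an open set `Ω`, then the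
Cole–Hopf transform `v = −2 u_x/u` satisfies the nonautonomous Burgers-type equation
`v_t + a(v v_x − v_xx) − c(x v_x + v) + g v_x = 2(2bx − f)` on `Ω`. -/
theorem cole_hopf_diffusion_to_burgers
    (a b c d f g : ℝ → ℝ) (Ω : Set (ℝ × ℝ)) (hΩ : IsOpen Ω)
    (u ux uxx uxxx ut utx : ℝ → ℝ → ℝ)
    (hupos : ∀ x t, (x, t) ∈ Ω → 0 < u x t)
    (hux : ∀ x t, (x, t) ∈ Ω → HasDerivAt (fun ξ => u ξ t) (ux x t) x)
    (huxx : ∀ x t, (x, t) ∈ Ω → HasDerivAt (fun ξ => ux ξ t) (uxx x t) x)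
    (huxxx : ∀ x t, (x, t) ∈ Ω → HasDerivAt (fun ξ => uxx ξ t) (uxxx x t) x)
    (hut : ∀ x t, (x, t) ∈ Ω → HasDerivAt (fun s => u x s) (ut x t) t)
    (hutx : ∀ x t, (x, t) ∈ Ω → HasDerivAt (fun ξ => ut ξ t) (utx x t) x)
    (hmixed : ∀ x t, (x, t) ∈ Ω → HasDerivAt (fun s => ux x s) (utx x t) t)
    (hcont : ContinuousOn (fun p : ℝ × ℝ =>
      (u p.1 p.2, ux p.1 p.2, uxx p.1 p.2, uxxx p.1 p.2, ut p.1 p.2, utx p.1 p.2)) Ω)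
    (hpde : ∀ x t, (x, t) ∈ Ω →
      ut x t = a t * uxx x t - (g t - c t * x) * ux x t
        + (d t + f t * x - b t * x ^ 2) * u x t)
    (v : ℝ → ℝ → ℝ)
    (hv : ∀ x t, v x t = -2 * ux x t / u x t) :
    ∀ x t, (x, t) ∈ Ω →
      deriv (fun s => v x s) t
        + a t * (v x t * deriv (fun ξ => v ξ t) x
            - deriv (fun ξ => deriv (fun ξ' => v ξ' t) ξ) x)
        - c t * (x * deriv (fun ξ => v ξ t) x + v x t)
        + g t * deriv (fun ξ => v ξ t) x
      = 2 * (2 * b t * x - f t) := by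

  intro x t hxt
  have hne : ∀ ξ s, (ξ, s) ∈ Ω → u ξ s ≠ 0 := fun ξ s h => (hupos ξ s h).ne'
  have hU : u x t ≠ 0 := hne x t hxt
  have hnx : ∀ᶠ ξ in nhds x, (ξ, t) ∈ Ω :=
    (continuous_id.prodMk continuous_const).continuousAt.preimage_mem_nhds
      (hΩ.mem_nhds hxt)
  -- first spatial derivative of v at any nearby point
  have hvx : ∀ ξ, (ξ, t) ∈ Ω → HasDerivAt (fun ξ' => v ξ' t)
      (-2 * (uxx ξ t * u ξ t - ux ξ t ^ 2) / u ξ t ^ 2) ξ := by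
    intro ξ hξ
    have h1 := ((huxx ξ t hξ).const_mul (-2 : ℝ)).div (hux ξ t hξ) (hne ξ t hξ)
    have h2 : (fun ξ' => v ξ' t) = fun ξ' => -2 * ux ξ' t / u ξ' t := by
      funext ξ'; exact hv ξ' t
    rw [h2]
    refine h1.congr_deriv ?_
    ring
  have hvx_deriv : deriv (fun ξ' => v ξ' t) x
      = -2 * (uxx x t * u x t - ux x t ^ 2) / u x t ^ 2 := (hvx x hxt).deriv
  -- second spatial derivative of v
  have hnum := (((huxxx x t hxt).mul (hux x t hxt)).sub
      ((huxx x t hxt).pow 2)).const_mul (-2 : ℝ)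
  have hden := (hux x t hxt).pow 2
  have h2nd := hnum.div hden (pow_ne_zero 2 hU)
  have heq2 : (fun ξ => deriv (fun ξ' => v ξ' t) ξ)
      =ᶠ[nhds x] fun ξ => -2 * (uxx ξ t * u ξ t - ux ξ t ^ 2) / u ξ t ^ 2 :=
    hnx.mono fun ξ hξ => (hvx ξ hξ).deriv
  have hvxx_deriv := heq2.deriv_eq.trans h2nd.deriv
  -- time derivative of v
  have hvt : HasDerivAt (fun s => v x s)
      ((-2 * utx x t * u x t - -2 * ux x t * ut x t) / u x t ^ 2) t := by
    have h1 := ((hmixed x t hxt).const_mul (-2 : ℝ)).div (hut x t hxt) hU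
    have h2 : (fun s => v x s) = fun s => -2 * ux x s / u x s := by
      funext s; exact hv x s
    rw [h2]
    exact h1
  -- x-derivative of the PDE gives a formula for utx
  have hRHS : HasDerivAt (fun ξ => a t * uxx ξ t - (g t - c t * ξ) * ux ξ t
      + (d t + f t * ξ - b t * ξ ^ 2) * u ξ t)
      (a t * uxxx x t + c t * ux x t - (g t - c t * x) * uxx x t
        + (f t - 2 * b t * x) * u x t + (d t + f t * x - b t * x ^ 2) * ux x t) x := by
    have h1 := (huxxx x t hxt).const_mul (a t)
    have h2 := (((hasDerivAt_id x).const_mul (c t)).const_sub (g t)).mul (huxx x t hxt)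
    have h3 := ((((hasDerivAt_id x).const_mul (f t)).const_add (d t)).sub
      ((hasDerivAt_pow 2 x).const_mul (b t))).mul (hux x t hxt)
    refine ((h1.sub h2).add h3).congr_deriv ?_
    push_cast
    simp only [id_eq, Pi.sub_apply]
    ring
  have hutx_eq : utx x t = a t * uxxx x t + c t * ux x t
      - (g t - c t * x) * uxx x t + (f t - 2 * b t * x) * u x t
      + (d t + f t * x - b t * x ^ 2) * ux x t := by
    have heq : (fun ξ => ut ξ t) =ᶠ[nhds x]
        (fun ξ => a t * uxx ξ t - (g t - c t * ξ) * ux ξ t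
          + (d t + f t * ξ - b t * ξ ^ 2) * u ξ t) :=
      hnx.mono fun ξ hξ => hpde ξ t hξ
    exact (hutx x t hxt).unique (hRHS.congr_of_eventuallyEq heq)
  rw [hvt.deriv, hvx_deriv, hvxx_deriv, hv x t, hutx_eq, hpde x t hxt]
  simp only [Pi.pow_apply, Pi.mul_apply, Pi.sub_apply]
  push_cast
  field_simp
  ring
end

section
/- Let c₀, c₁, c₂, c₃ be real constants, let a, c : ℝ → ℝ be continuous, and let β, γ : ℝ → ℝ be differentiable with β' = cβ and γ' = c₀ a β². Define g = c₁ a β, b = −(1/2) c₂ a β⁴, and f = (1/2) a β³ (2c₂γ + c₃). Let F : ℝ → ℝ be twice continuously differentiable and satisfy F''(z) = (c₀ + c₁) F'(z) + F(z) F'(z) + 2c₂ z + c₃ for all z ∈ ℝ. Then v(x,t) = β(t) F(β(t) x + γ(t)) satisfies the nonautonomous Burgers-type equation v_t + a(v v_x − v_xx) − c(x v_x + v) + g v_x = 2(2bx − f) on ℝ × ℝ. -/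
/-- traveling-wave-type solutions `v(x,t) = β(t) F(β(t)x + γ(t))` of the
nonautonomous Burgers-type equation, where `β' = cβ`, `γ' = c₀aβ²`, `g = c₁aβ`,
`b = −(1/2)c₂aβ⁴`, `f = (1/2)aβ³(2c₂γ + c₃)`, and `F'' = (c₀+c₁)F' + FF' + 2c₂z + c₃`. -/
theorem burgers_traveling_wave_solution
    (c₀ c₁ c₂ c₃ : ℝ) (a c : ℝ → ℝ)
    (ha : Continuous a) (hc : Continuous c)
    (β γ : ℝ → ℝ)
    (hβ : ∀ t, HasDerivAt β (c t * β t) t)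
    (hγ : ∀ t, HasDerivAt γ (c₀ * a t * (β t) ^ 2) t)
    (g b f : ℝ → ℝ)
    (hg : ∀ t, g t = c₁ * a t * β t)
    (hb : ∀ t, b t = -(1 / 2) * c₂ * a t * (β t) ^ 4)
    (hf : ∀ t, f t = 1 / 2 * a t * (β t) ^ 3 * (2 * c₂ * γ t + c₃))
    (F : ℝ → ℝ) (hF : ContDiff ℝ 2 F)
    (hFeq : ∀ z, deriv (deriv F) z
      = (c₀ + c₁) * deriv F z + F z * deriv F z + 2 * c₂ * z + c₃)
    (v : ℝ → ℝ → ℝ)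
    (hv : ∀ x t, v x t = β t * F (β t * x + γ t)) :
    ∀ x t : ℝ,
      deriv (fun s => v x s) t
        + a t * (v x t * deriv (fun ξ => v ξ t) x
            - deriv (fun ξ => deriv (fun ξ' => v ξ' t) ξ) x)
        - c t * (x * deriv (fun ξ => v ξ t) x + v x t)
        + g t * deriv (fun ξ => v ξ t) x
      = 2 * (2 * b t * x - f t) := by
  have hvfun : v = fun x t => β t * F (β t * x + γ t) := by
    funext x t; exact hv x t
  subst hvfun
  have hF1 : Differentiable ℝ F := hF.differentiable (by norm_num)
  have hF2 : Differentiable ℝ (deriv F) := by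
    have : ContDiff ℝ 1 (deriv F) :=
      (contDiff_succ_iff_deriv.mp (show ContDiff ℝ (1 + 1) F by exact_mod_cast hF)).2.2
    exact this.differentiable (by norm_num)
  -- spatial derivative
  have hxd : ∀ x t : ℝ, HasDerivAt (fun ξ => β t * F (β t * ξ + γ t))
      (β t * (deriv F (β t * x + γ t) * β t)) x := by
    intro x t
    have h1 : HasDerivAt (fun ξ : ℝ => β t * ξ + γ t) (β t) x := by
      simpa using ((hasDerivAt_id x).const_mul (β t)).add_const (γ t)
    exact (((hF1 (β t * x + γ t)).hasDerivAt.comp x h1)).const_mul (β t)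
  intro x t
  have hdx : deriv (fun ξ => β t * F (β t * ξ + γ t)) x
      = β t * (deriv F (β t * x + γ t) * β t) := (hxd x t).deriv
  -- second spatial derivative
  have hdxfun : (fun ξ => deriv (fun ξ' => β t * F (β t * ξ' + γ t)) ξ)
      = fun ξ => β t * (deriv F (β t * ξ + γ t) * β t) := by
    funext ξ; exact (hxd ξ t).deriv
  have hdxx : deriv (fun ξ => deriv (fun ξ' => β t * F (β t * ξ' + γ t)) ξ) x
      = β t * (deriv (deriv F) (β t * x + γ t) * β t * β t) := by
    rw [hdxfun]
    have h1 : HasDerivAt (fun ξ : ℝ => β t * ξ + γ t) (β t) x := by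
      simpa using ((hasDerivAt_id x).const_mul (β t)).add_const (γ t)
    have h2 : HasDerivAt (fun ξ => deriv F (β t * ξ + γ t) * β t)
        (deriv (deriv F) (β t * x + γ t) * β t * β t) x := by
      have h := (((hF2 (β t * x + γ t)).hasDerivAt.comp x h1)).mul_const (β t)
      exact h
    exact (h2.const_mul (β t)).deriv
  -- time derivative
  have hdt : deriv (fun s => β s * F (β s * x + γ s)) t
      = c t * β t * F (β t * x + γ t)
        + β t * (deriv F (β t * x + γ t) * (c t * β t * x + c₀ * a t * (β t) ^ 2)) := by
    have hz : HasDerivAt (fun s => β s * x + γ s)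
        (c t * β t * x + c₀ * a t * (β t) ^ 2) t :=
      ((hβ t).mul_const x).add (hγ t)
    have hFz : HasDerivAt (fun s => F (β s * x + γ s))
        (deriv F (β t * x + γ t) * (c t * β t * x + c₀ * a t * (β t) ^ 2)) t :=
      (hF1 (β t * x + γ t)).hasDerivAt.comp t hz
    exact ((hβ t).mul hFz).deriv
  simp only [hdx, hdxx, hdt, hg, hb, hf, hFeq]
  ring
end
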